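/- arXiv:1710.06916 — 12 statements merged into one kernel-verified Lean document; each statement's English description precedes it below -/
import Mathlib

section
/- Given f₁, f₂ ∈ L^1[0,1] with f₁(x) > 0 for almost all x, and given an integer k ≥ 2, there exist points 0 ≤ x₁ ≤ x₂ ≤ 1 such that ∫_{x₁}^{x₂} fᵢ(t) dt = (1/k) ∫₀¹ fᵢ(t) dt for i = 1, 2. -/
/-! Since `f₁ > 0` a.e., its primitive `F₁` is a homeomorphism of `[0, 1]` onto `[0, T]`,
`T = F₁ 1`. Reparametrizing by `y = F₁ x`, the condition on `f₁` says that `[x₁, x₂]` corresponds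
to an interval `[y, y + T / k]`, and the condition on `f₂` becomes the universal chord theorem for
the continuous function `Φ = F₂ ∘ F₁⁻¹`: the `k` increments of `Φ` over consecutive steps of length
`T / k` add up to `Φ T - Φ 0`, so one is at most and one at least their mean, and the
intermediate value theorem gives a step with increment exactly `(Φ T - Φ 0) / k`. -/

open MeasureTheory Set

theorem intervalIntegral_pos_of_ae_pos {f : ℝ → ℝ} {a b : ℝ} (hab : a < b)
    (hf : IntegrableOn f (Ioc a b)) (hpos : ∀ᵐ t ∂volume.restrict (Ioc a b), 0 < f t) :
    0 < ∫ t in a..b, f t := by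
  have hsupp : Function.support f =ᵐ[volume.restrict (Ioc a b)] (univ : Set ℝ) :=
    ae_eq_univ.mpr (ae_iff.mp (hpos.mono fun _ ht => ht.ne'))
  rw [intervalIntegral.integral_of_le hab.le,
    setIntegral_pos_iff_support_of_nonneg_ae (hpos.mono fun _ ht => ht.le) hf,
    ← Measure.restrict_apply' measurableSet_Ioc, measure_congr hsupp,
    Measure.restrict_apply_univ, Real.volume_Ioc]
  simpa using hab

theorem intervalIntegral.integral_eq_sub_of_mem_Icc {f : ℝ → ℝ} {a b x y : ℝ}
    (hf : IntegrableOn f (Icc a b)) (hx : x ∈ Icc a b) (hy : y ∈ Icc a b) :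
    ∫ t in x..y, f t = (∫ t in a..y, f t) - ∫ t in a..x, f t := by
  have hint : ∀ {u v}, u ∈ Icc a b → v ∈ Icc a b → IntervalIntegrable f volume u v :=
    fun hu hv => (hf.mono_set (uIcc_subset_Icc hu hv)).intervalIntegrable
  have ha : a ∈ Icc a b := left_mem_Icc.mpr (hx.1.trans hx.2)
  exact (intervalIntegral.integral_interval_sub_left (hint ha hy) (hint ha hx)).symm

theorem strictMonoOn_primitive_of_ae_pos {f : ℝ → ℝ} {a b : ℝ} (hf : IntegrableOn f (Icc a b))
    (hpos : ∀ᵐ t ∂volume.restrict (Icc a b), 0 < f t) :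
    StrictMonoOn (fun x => ∫ t in a..x, f t) (Icc a b) := by
  intro x hx y hy hxy
  have hsub : Ioc x y ⊆ Icc a b := fun t ht => ⟨hx.1.trans ht.1.le, ht.2.trans hy.2⟩
  have := intervalIntegral_pos_of_ae_pos hxy (hf.mono_set hsub)
    (ae_restrict_of_ae_restrict_of_subset hsub hpos)
  rw [intervalIntegral.integral_eq_sub_of_mem_Icc hf hx hy] at this
  exact sub_pos.mp this

theorem StrictMonoOn.exists_continuous_invOn {α β : Type*}
    [ConditionallyCompleteLinearOrder α] [TopologicalSpace α] [OrderTopology α] [DenselyOrdered α]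
    [LinearOrder β] [TopologicalSpace β] [OrderTopology β]
    {f : α → β} {a b : α} (hab : a ≤ b)
    (hmono : StrictMonoOn f (Icc a b)) (hcont : ContinuousOn f (Icc a b)) :
    ∃ g : β → α, Continuous g ∧ MapsTo g univ (Icc a b) ∧
      InvOn g f (Icc a b) (Icc (f a) (f b)) := by
  have hfab : f a ≤ f b := hmono.monotoneOn (left_mem_Icc.mpr hab) (right_mem_Icc.mpr hab) hab
  let f' : Icc a b → Icc (f a) (f b) := fun x =>
    ⟨f x, hmono.monotoneOn (left_mem_Icc.mpr hab) x.2 x.2.1,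
      hmono.monotoneOn x.2 (right_mem_Icc.mpr hab) x.2.2⟩
  have hf'mono : StrictMono f' := fun x y hxy => hmono x.2 y.2 hxy
  have hf'surj : Function.Surjective f' := fun y => by
    obtain ⟨x, hx, hfx⟩ := intermediate_value_Icc hab hcont y.2
    exact ⟨⟨x, hx⟩, Subtype.ext hfx⟩
  let e := hf'mono.orderIsoOfSurjective f' hf'surj
  refine ⟨fun y => e.symm (projIcc (f a) (f b) hfab y),
    continuous_subtype_val.comp (e.symm.continuous.comp continuous_projIcc),
    fun y _ => (e.symm _).2, fun x hx => ?_, fun y hy => ?_⟩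
  · have : projIcc (f a) (f b) hfab (f x) = e ⟨x, hx⟩ := projIcc_of_mem hfab _
    simp [this]
  · have : projIcc (f a) (f b) hfab y = ⟨y, hy⟩ := projIcc_of_mem hfab hy
    simp only [this]
    exact congrArg Subtype.val (e.apply_symm_apply ⟨y, hy⟩)

theorem exists_add_sub_eq_div_of_continuousOn {φ : ℝ → ℝ} {a c : ℝ} {k : ℕ} (hc : 0 ≤ c)
    (hk : 0 < k) (hφ : ContinuousOn φ (Icc a (a + k * c))) :
    ∃ y ∈ Icc a (a + (k - 1) * c), φ (y + c) - φ y = (φ (a + k * c) - φ a) / k := by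
  set ψ : ℝ → ℝ := fun y => φ (y + c) - φ y
  have hψ : ContinuousOn ψ (Icc a (a + (k - 1) * c)) := by
    have hshift : MapsTo (· + c) (Icc a (a + (k - 1) * c)) (Icc a (a + k * c)) :=
      fun y hy => ⟨by linarith [hy.1], by linarith [hy.2]⟩
    have hincl : Icc a (a + (k - 1) * c) ⊆ Icc a (a + k * c) :=
      Icc_subset_Icc_right (by nlinarith)
    exact (hφ.comp (continuousOn_id.add continuousOn_const) hshift).sub (hφ.mono hincl)
  have hnodes : ∀ j ∈ Finset.range k, (a + j * c : ℝ) ∈ Icc a (a + (k - 1) * c) := by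
    intro j hj
    have : (j : ℝ) ≤ k - 1 := by
      have : (j : ℝ) + 1 ≤ k := by exact_mod_cast Finset.mem_range.mp hj
      linarith
    exact ⟨by nlinarith, by nlinarith⟩
  -- the increments of φ over the k consecutive steps of length c telescope
  have hsum : ∑ j ∈ Finset.range k, ψ (a + j * c) =
      ∑ _j ∈ Finset.range k, (φ (a + k * c) - φ a) / k := by
    rw [Finset.sum_const, Finset.card_range, nsmul_eq_mul, mul_div_cancel₀ _ (by positivity)]
    convert Finset.sum_range_sub (fun j : ℕ => φ (a + j * c)) k using 2 with j
    · simp only [ψ, Nat.cast_succ, add_mul, one_mul, add_assoc]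
    · simp
  have hne : (Finset.range k).Nonempty := Finset.nonempty_range_iff.mpr hk.ne'
  obtain ⟨i, hi, hψi⟩ := Finset.exists_le_of_sum_le hne hsum.le
  obtain ⟨j, hj, hψj⟩ := Finset.exists_le_of_sum_le hne hsum.ge
  have hsub := uIcc_subset_Icc (hnodes i hi) (hnodes j hj)
  obtain ⟨y, hy, hψy⟩ := intermediate_value_uIcc (hψ.mono hsub) (mem_uIcc.mpr (Or.inl ⟨hψi, hψj⟩))
  exact ⟨y, hsub hy, hψy⟩

theorem exists_sub_eq_div_of_strictMonoOn_of_continuousOn {F₁ F₂ : ℝ → ℝ} {a b : ℝ} {k : ℕ}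
    (hab : a ≤ b) (hk : 0 < k) (hF₁ : StrictMonoOn F₁ (Icc a b))
    (hF₁c : ContinuousOn F₁ (Icc a b)) (hF₂c : ContinuousOn F₂ (Icc a b)) :
    ∃ x₁ x₂, a ≤ x₁ ∧ x₁ ≤ x₂ ∧ x₂ ≤ b ∧
      F₁ x₂ - F₁ x₁ = (F₁ b - F₁ a) / k ∧ F₂ x₂ - F₂ x₁ = (F₂ b - F₂ a) / k := by
  have hk0 : (0 : ℝ) < k := by exact_mod_cast hk
  set c := (F₁ b - F₁ a) / k
  have hkc : F₁ a + k * c = F₁ b := by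
    rw [mul_div_cancel₀ _ hk0.ne', add_sub_cancel]
  have hc : 0 ≤ c := div_nonneg (sub_nonneg.mpr
    (hF₁.monotoneOn (left_mem_Icc.mpr hab) (right_mem_Icc.mpr hab) hab)) hk0.le
  obtain ⟨U, hU, hUmem, hUF₁, hF₁U⟩ := hF₁.exists_continuous_invOn hab hF₁c
  obtain ⟨y, hy, hstep⟩ := exists_add_sub_eq_div_of_continuousOn hc hk
    (hF₂c.comp_continuous hU fun y => hUmem trivial).continuousOn
  have hy₁ : y ∈ Icc (F₁ a) (F₁ b) := ⟨hy.1, by nlinarith [hy.2]⟩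
  have hy₂ : y + c ∈ Icc (F₁ a) (F₁ b) := ⟨by linarith [hy.1], by nlinarith [hy.2]⟩
  have hUa : U (F₁ a) = a := hUF₁ (left_mem_Icc.mpr hab)
  have hUb : U (F₁ a + k * c) = b := by simpa only [hkc] using hUF₁ (right_mem_Icc.mpr hab)
  refine ⟨U y, U (y + c), (hUmem trivial).1,
    (hF₁.le_iff_le (hUmem trivial) (hUmem trivial)).mp ?_, (hUmem trivial).2, ?_, ?_⟩
  · rw [hF₁U hy₁, hF₁U hy₂]
    linarith
  · rw [hF₁U hy₁, hF₁U hy₂, add_sub_cancel_left]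
  · simpa only [Function.comp_apply, hUa, hUb] using hstep

theorem stmt_1 (f₁ f₂ : ℝ → ℝ) (hf₁ : IntegrableOn f₁ (Set.Icc 0 1))
    (hf₂ : IntegrableOn f₂ (Set.Icc 0 1))
    (hpos : ∀ᵐ t ∂(volume.restrict (Set.Icc (0:ℝ) 1)), 0 < f₁ t)
    (k : ℕ) (hk : 2 ≤ k) :
    ∃ x₁ x₂ : ℝ, 0 ≤ x₁ ∧ x₁ ≤ x₂ ∧ x₂ ≤ 1 ∧
      (∫ t in x₁..x₂, f₁ t) = (1 / k) * ∫ t in (0:ℝ)..1, f₁ t ∧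
      (∫ t in x₁..x₂, f₂ t) = (1 / k) * ∫ t in (0:ℝ)..1, f₂ t := by
  have hprim : ∀ {f : ℝ → ℝ}, IntegrableOn f (Icc 0 1) →
      ContinuousOn (fun x => ∫ t in (0:ℝ)..x, f t) (Icc 0 1) := fun hf => by
    rw [← uIcc_of_le zero_le_one] at hf ⊢
    exact intervalIntegral.continuousOn_primitive_interval hf
  obtain ⟨x₁, x₂, h0x₁, hx₁x₂, hx₂1, h₁, h₂⟩ :=
    exists_sub_eq_div_of_strictMonoOn_of_continuousOn zero_le_one (by omega : 0 < k)
      (strictMonoOn_primitive_of_ae_pos hf₁ hpos) (hprim hf₁) (hprim hf₂)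
  have hx₁ : x₁ ∈ Icc (0 : ℝ) 1 := ⟨h0x₁, hx₁x₂.trans hx₂1⟩
  have hx₂ : x₂ ∈ Icc (0 : ℝ) 1 := ⟨h0x₁.trans hx₁x₂, hx₂1⟩
  refine ⟨x₁, x₂, h0x₁, hx₁x₂, hx₂1, ?_, ?_⟩
  · rw [intervalIntegral.integral_eq_sub_of_mem_Icc hf₁ hx₁ hx₂, h₁]
    simp [div_eq_inv_mul]
  · rw [intervalIntegral.integral_eq_sub_of_mem_Icc hf₂ hx₁ hx₂, h₂]
    simp [div_eq_inv_mul]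
end

section
/- For every pair of functions f₁, f₂ ∈ L^1[0,1], there exist points 0 ≤ x₁ ≤ x₂ ≤ 1 such that the switch function σ = Σ₂(x₁,x₂), defined by σ(t) = 1 for t ∈ [0,x₁) ∪ [x₂,1] and σ(t) = -1 for t ∈ [x₁,x₂), satisfies ∫₀¹ σ(t) f₁(t) dt = 0 and ∫₀¹ σ(t) f₂(t) dt = 0. -/
/-!
Write `F = F₁ + i F₂` for the primitives of `f₁, f₂`; the switch integrals vanish exactly when
`2 (F x₂ - F x₁) = F 1 - F 0`. If this failed for all `0 ≤ x₁ ≤ x₂ ≤ 1`, then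
`Φ (x₁, x₂) = 2 (F x₂ - F x₁) - (F 1 - F 0)` would have a continuous logarithm on that
(simply connected) triangle. Since `Φ (a, 1) = -Φ (0, a)`, the logarithm changes by the same odd
multiple of `πi` along the edge `x₁ = 0` and along the edge `x₂ = 1`, and since `Φ` is constant on
the diagonal it does not change there: impossible around a closed loop.
-/

open MeasureTheory Set Complex

theorem Continuous.eq_of_exp_comp_eq_const {A : Type*} [TopologicalSpace A] [PreconnectedSpace A]
    {u : A → ℂ} (hu : Continuous u) {z : ℂ} (h : ∀ a, exp (u a) = z) (a b : A) : u a = u b :=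
  congrFun (isCoveringMap_exp.eq_of_comp_eq hu continuous_const
    (funext fun x ↦ Subtype.ext ((h x).trans (h b).symm)) b rfl) a

theorem exists_continuous_exp_comp_eq {X : Type*} [TopologicalSpace X] [SimplyConnectedSpace X]
    [LocallyPathConnectedSpace X] {g : X → ℂ} (hg : Continuous g) (hg₀ : ∀ x, g x ≠ 0) :
    ∃ θ : X → ℂ, Continuous θ ∧ ∀ x, exp (θ x) = g x := by
  obtain ⟨x₀⟩ := (inferInstance : Nonempty X)
  obtain ⟨θ, ⟨-, hθ⟩, -⟩ := isCoveringMapOn_exp.existsUnique_continuousMap_lifts ⟨g, hg⟩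
    (exp_log (hg₀ x₀)) hg₀
  exact ⟨θ, θ.continuous, congrFun hθ⟩

theorem exists_eq_zero_of_boundary_antipodal {H : ℝ × ℝ → ℂ} (hH : Continuous H)
    (h_bot : ∀ s, H (s, 0) = H (0, 0)) (h_right : ∀ t, H (1, t) = H (0, 0))
    (h_top : ∀ s, H (s, 1) = -H (0, s)) : ∃ p, H p = 0 := by
  by_contra! hH₀
  obtain ⟨θ, hθ, hexp⟩ := exists_continuous_exp_comp_eq hH hH₀
  have bot : θ (1, 0) = θ (0, 0) :=
    (hθ.comp (.prodMk_left 0)).eq_of_exp_comp_eq_const (fun s ↦ (hexp _).trans (h_bot s)) 1 0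
  have right : θ (1, 1) = θ (1, 0) :=
    (hθ.comp (.prodMk_right 1)).eq_of_exp_comp_eq_const (fun t ↦ (hexp _).trans (h_right t)) 1 0
  have top : θ (1, 1) - θ (0, 1) = θ (0, 1) - θ (0, 0) := by
    refine ((hθ.comp (.prodMk_left 1)).sub (hθ.comp (.prodMk_right 0))).eq_of_exp_comp_eq_const
      (z := -1) (fun s ↦ ?_) 1 0
    change exp (θ (s, 1) - θ (0, s)) = -1
    rw [exp_sub, hexp, hexp, h_top, neg_div, div_self (hH₀ _)]
  have : H (0, 1) = H (0, 0) := by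
    rw [← hexp, ← hexp]
    congr 1
    linear_combination (-top + bot + right) / 2
  exact hH₀ (0, 0) (by linear_combination -(h_top 0).symm.trans this / 2)

theorem exists_two_mul_sub_eq_sub {F : ℝ → ℂ} (hF : ContinuousOn F (Icc 0 1)) :
    ∃ x₁ x₂, 0 ≤ x₁ ∧ x₁ ≤ x₂ ∧ x₂ ≤ 1 ∧ 2 * (F x₂ - F x₁) = F 1 - F 0 := by
  set c : ℝ → ℝ := fun x ↦ projIcc 0 1 zero_le_one x
  have hc : Continuous c := continuous_subtype_val.comp continuous_projIcc
  have hcI (x : ℝ) : c x ∈ Icc 0 1 := (projIcc 0 1 zero_le_one x).2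
  have hc0 : c 0 = 0 := by simp [c]
  have hc1 : c 1 = 1 := by simp [c]
  -- `(s, t) ↦ (s t, t)` maps the unit square onto the triangle
  set H : ℝ × ℝ → ℂ := fun p ↦ 2 * (F (c p.2) - F (c p.1 * c p.2)) - (F 1 - F 0)
  have hH : Continuous H := by
    have h₁ : Continuous fun p : ℝ × ℝ ↦ F (c p.2) := hF.comp_continuous (by fun_prop) (hcI ·.2)
    have h₂ : Continuous fun p : ℝ × ℝ ↦ F (c p.1 * c p.2) :=
      hF.comp_continuous (by fun_prop) fun p ↦ unitInterval.mul_mem (hcI p.1) (hcI p.2)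
    exact (continuous_const.mul (h₁.sub h₂)).sub continuous_const
  obtain ⟨⟨s, t⟩, hst⟩ := exists_eq_zero_of_boundary_antipodal hH (by simp [H, hc0])
    (by simp [H, hc0, hc1]) (fun s ↦ by simp only [H, hc0, hc1, mul_one, zero_mul]; ring)
  exact ⟨c s * c t, c t, mul_nonneg (hcI s).1 (hcI t).1,
    mul_le_of_le_one_left (hcI t).1 (hcI s).2, (hcI t).2, by linear_combination hst⟩

theorem integral_switch_mul {f : ℝ → ℝ} {a b x₁ x₂ : ℝ} (hf : IntervalIntegrable f volume a b)
    (ha : a ≤ x₁) (h₁₂ : x₁ ≤ x₂) (hb : x₂ ≤ b) :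
    ∫ t in a..b, (if x₁ ≤ t ∧ t < x₂ then (-1 : ℝ) else 1) * f t =
      (∫ t in a..b, f t) - 2 * ((∫ t in a..x₂, f t) - ∫ t in a..x₁, f t) := by
  have hab : a ≤ b := ha.trans (h₁₂.trans hb)
  have hsplit : (fun t ↦ (if x₁ ≤ t ∧ t < x₂ then (-1 : ℝ) else 1) * f t) =
      fun t ↦ f t - 2 * (Ico x₁ x₂).indicator f t := by
    ext t
    by_cases ht : x₁ ≤ t ∧ t < x₂ <;> simp [indicator, ht]; ring
  have hind : ∫ t in a..b, (Ico x₁ x₂).indicator f t = ∫ t in x₁..x₂, f t := by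
    rw [intervalIntegral.integral_of_le hab, intervalIntegral.integral_of_le h₁₂,
      setIntegral_indicator measurableSet_Ico]
    refine setIntegral_congr_set ?_
    have hsub : Ico x₁ x₂ ⊆ Icc a b := Ico_subset_Icc_self.trans (Icc_subset_Icc ha hb)
    refine (Ioc_ae_eq_Icc.inter .rfl).trans ?_
    rw [inter_eq_right.2 hsub]
    exact Ico_ae_eq_Ioc
  have hf_ind : IntervalIntegrable ((Ico x₁ x₂).indicator f) volume a b :=
    (intervalIntegrable_iff_integrableOn_Ioc_of_le hab).2
      (hf.1.indicator measurableSet_Ico)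
  have hmem (x : ℝ) (hax : a ≤ x) (hxb : x ≤ b) : IntervalIntegrable f volume a x :=
    hf.mono_set (uIcc_subset_uIcc_left (by simp [uIcc_of_le hab, hax, hxb]))
  rw [hsplit, intervalIntegral.integral_sub hf (hf_ind.const_mul 2),
    intervalIntegral.integral_const_mul, hind, intervalIntegral.integral_interval_sub_left
      (hmem x₂ (ha.trans h₁₂) hb) (hmem x₁ ha (h₁₂.trans hb))]

theorem stmt_2 (f₁ f₂ : ℝ → ℝ) (hf₁ : IntegrableOn f₁ (Set.Icc 0 1))
    (hf₂ : IntegrableOn f₂ (Set.Icc 0 1)) :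
    ∃ x₁ x₂ : ℝ, 0 ≤ x₁ ∧ x₁ ≤ x₂ ∧ x₂ ≤ 1 ∧
      (∫ t in (0:ℝ)..1, (if x₁ ≤ t ∧ t < x₂ then (-1:ℝ) else 1) * f₁ t) = 0 ∧
      (∫ t in (0:ℝ)..1, (if x₁ ≤ t ∧ t < x₂ then (-1:ℝ) else 1) * f₂ t) = 0 := by
  rw [← uIcc_of_le zero_le_one] at hf₁ hf₂
  set G₁ : ℝ → ℝ := fun x ↦ ∫ t in (0:ℝ)..x, f₁ t
  set G₂ : ℝ → ℝ := fun x ↦ ∫ t in (0:ℝ)..x, f₂ t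
  have hG : ContinuousOn (fun x ↦ (G₁ x : ℂ) + G₂ x * I) (uIcc 0 1) :=
    (continuous_ofReal.comp_continuousOn (intervalIntegral.continuousOn_primitive_interval hf₁)).add
      ((continuous_ofReal.comp_continuousOn
        (intervalIntegral.continuousOn_primitive_interval hf₂)).mul continuousOn_const)
  rw [uIcc_of_le zero_le_one] at hG
  obtain ⟨x₁, x₂, h₀, h₁₂, h₂, hchord⟩ := exists_two_mul_sub_eq_sub hG
  have hG₁ : 2 * (G₁ x₂ - G₁ x₁) = G₁ 1 := by
    simpa [G₁, G₂] using congrArg re hchord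
  have hG₂ : 2 * (G₂ x₂ - G₂ x₁) = G₂ 1 := by
    simpa [G₁, G₂] using congrArg im hchord
  refine ⟨x₁, x₂, h₀, h₁₂, h₂, ?_, ?_⟩
  · rw [integral_switch_mul hf₁.intervalIntegrable h₀ h₁₂ h₂]
    linear_combination -hG₁
  · rw [integral_switch_mul hf₂.intervalIntegrable h₀ h₁₂ h₂]
    linear_combination -hG₂
end

section
/- For each k ∈ ℕ and 1 ≤ m ≤ k, letting λ = (4k-8m+1)/(4k+1), f₁(t) = 1, and f₂(t) = ((4k+1)π/2)·cos((4k+1)πt/2), there do not exist 0 ≤ x₁ ≤ x₂ ≤ 1 such that ∫₀¹ (Σ₂(x₁,x₂)(t) - λ) fᵢ(t) dt = 0 for both i = 1, 2. -/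
/-!
Against the switch function `σ` of `[x₁, x₂)`, the integral of `(σ - λ) f` over `[0, 1]` is
`(1 - λ) ∫₀¹ f - 2 ∫_{x₁}^{x₂} f`. For `f = 1` the first condition forces
`x₂ - x₁ = (1 - λ) / 2 = 4m / (4k + 1)`, which is exactly `m` periods of
`F(t) = sin ((4k + 1) π t / 2)`, the antiderivative of `f₂`. Hence `F(x₂) = F(x₁)`, and since
`F(1) - F(0) = 1` the second condition collapses to `1 - λ = 0`, i.e. `m = 0`.
-/

open MeasureTheory Real

theorem integral_switch_sub_mul {a b x₁ x₂ : ℝ} (ha : a ≤ x₁) (h12 : x₁ ≤ x₂) (hb : x₂ ≤ b)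
    (c : ℝ) {f : ℝ → ℝ} (hf : IntervalIntegrable f volume a b) :
    ∫ t in a..b, ((if x₁ ≤ t ∧ t < x₂ then (-1 : ℝ) else 1) - c) * f t
      = (1 - c) * (∫ t in a..b, f t) - 2 * ∫ t in x₁..x₂, f t := by
  have hind : IntervalIntegrable ((Set.Ioc x₁ x₂).indicator f) volume a b :=
    ⟨hf.1.indicator measurableSet_Ioc, hf.2.indicator measurableSet_Ioc⟩
  have hswitch : ∀ᵐ t, ((if x₁ ≤ t ∧ t < x₂ then (-1 : ℝ) else 1) - c) * f t
      = (1 - c) * f t - 2 * (Set.Ioc x₁ x₂).indicator f t := by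
    filter_upwards [volume.ae_ne x₁, volume.ae_ne x₂] with t h1 h2
    by_cases ht : t ∈ Set.Ioc x₁ x₂
    · rw [Set.indicator_of_mem ht, if_pos ⟨ht.1.le, lt_of_le_of_ne ht.2 h2⟩]
      ring
    · rw [Set.indicator_of_notMem ht, if_neg fun h => ht ⟨lt_of_le_of_ne h.1 h1.symm, h.2.le⟩]
      ring
  have hindicator : ∫ t in a..b, (Set.Ioc x₁ x₂).indicator f t = ∫ t in x₁..x₂, f t := by
    rw [intervalIntegral.integral_of_le (ha.trans (h12.trans hb)),
      setIntegral_indicator measurableSet_Ioc, Set.Ioc_inter_Ioc, max_eq_right ha,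
      min_eq_right hb, intervalIntegral.integral_of_le h12]
  rw [intervalIntegral.integral_congr_ae (hswitch.mono fun t ht _ => ht),
    intervalIntegral.integral_sub (hf.const_mul _) (hind.const_mul _),
    intervalIntegral.integral_const_mul, intervalIntegral.integral_const_mul, hindicator]

theorem integral_mul_cos_mul (ω u v : ℝ) :
    ∫ t in u..v, ω * cos (ω * t) = sin (ω * v) - sin (ω * u) := by
  have hcont : Continuous fun t => ω * cos (ω * t) := by fun_prop
  refine intervalIntegral.integral_eq_sub_of_hasDerivAt (f := fun t => sin (ω * t))
    (fun t _ => ?_) (hcont.intervalIntegrable u v)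
  simpa [mul_comm] using ((hasDerivAt_id t).const_mul ω).sin

theorem stmt_3_general (k m : ℕ) (hm : 1 ≤ m) :
    ¬ ∃ x₁ x₂ : ℝ, 0 ≤ x₁ ∧ x₁ ≤ x₂ ∧ x₂ ≤ 1 ∧
      (∫ t in (0:ℝ)..1,
        ((if x₁ ≤ t ∧ t < x₂ then (-1:ℝ) else 1) - (4*(k:ℝ) - 8*m + 1)/(4*k + 1))
          * (1:ℝ)) = 0 ∧
      (∫ t in (0:ℝ)..1,
        ((if x₁ ≤ t ∧ t < x₂ then (-1:ℝ) else 1) - (4*(k:ℝ) - 8*m + 1)/(4*k + 1))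
          * ((4*(k:ℝ) + 1) * π / 2 * Real.cos ((4*(k:ℝ) + 1) * π * t / 2))) = 0 := by
  rintro ⟨x₁, x₂, h0, h12, h21, H1, H2⟩
  set c : ℝ := 4 * k + 1
  have hc : 0 < c := by positivity
  have hgap : 1 - (4 * (k:ℝ) - 8 * m + 1) / c = 8 * m / c := by field_simp; ring
  rw [integral_switch_sub_mul h0 h12 h21 _ intervalIntegrable_const, hgap] at H1
  simp only [intervalIntegral.integral_const, smul_eq_mul, mul_one, sub_zero] at H1
  have hperiod : c * π / 2 * x₂ = c * π / 2 * x₁ + m * (2 * π) := by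
    rw [show x₂ = x₁ + 4 * m / c by linear_combination -H1 / 2]
    field_simp
    ring
  have hsin_one : sin (c * π / 2 * 1) = 1 := by
    rw [show c * π / 2 * 1 = π / 2 + k * (2 * π) by ring, sin_add_nat_mul_two_pi, sin_pi_div_two]
  simp only [show ∀ t, c * π * t / 2 = c * π / 2 * t from fun t => by ring] at H2
  rw [integral_switch_sub_mul h0 h12 h21 _ ((by fun_prop : Continuous _).intervalIntegrable 0 1),
    integral_mul_cos_mul, integral_mul_cos_mul, hsin_one, hperiod, sin_add_nat_mul_two_pi,
    hgap] at H2
  simp only [mul_zero, sin_zero, sub_self, sub_zero, mul_one] at H2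
  exact (show 0 < 8 * (m:ℝ) / c by positivity).ne' H2

theorem stmt_3 (k m : ℕ) (hm : 1 ≤ m) (hmk : m ≤ k) :
    ¬ ∃ x₁ x₂ : ℝ, 0 ≤ x₁ ∧ x₁ ≤ x₂ ∧ x₂ ≤ 1 ∧
      (∫ t in (0:ℝ)..1,
        ((if x₁ ≤ t ∧ t < x₂ then (-1:ℝ) else 1) - (4*(k:ℝ) - 8*m + 1)/(4*k + 1))
          * (1:ℝ)) = 0 ∧
      (∫ t in (0:ℝ)..1,
        ((if x₁ ≤ t ∧ t < x₂ then (-1:ℝ) else 1) - (4*(k:ℝ) - 8*m + 1)/(4*k + 1))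
          * ((4*(k:ℝ) + 1) * π / 2 * Real.cos ((4*(k:ℝ) + 1) * π * t / 2))) = 0 :=
  stmt_3_general k m hm
end

section
/- The set {(4k-8m+1)/(4k+1) : k, m ∈ ℕ, 1 ≤ m ≤ k} is dense in the interval [-1,1]. -/
/-! The point `(4k - 8m + 1)/(4k + 1) = 1 - 8m/(4k + 1)` runs, as `m` ranges over `1, …, k`,
through a grid of mesh `8/(4k + 1)` from `1 - 8/(4k + 1)` down to `-1 + 2/(4k + 1)`.
Every `y ∈ [-1, 1]` is therefore within `8/(4k + 1)` of a grid point, and `k → ∞`. -/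

lemma exists_nat_mem_Icc_abs_sub_le_one {k : ℕ} (hk : 1 ≤ k) {t : ℝ} (ht₀ : 0 ≤ t)
    (htk : t ≤ k + 1) : ∃ m : ℕ, 1 ≤ m ∧ m ≤ k ∧ |(m : ℝ) - t| ≤ 1 := by
  rcases le_or_gt t 1 with ht₁ | ht₁
  · exact ⟨1, le_rfl, hk, by rw [abs_le]; push_cast; constructor <;> linarith⟩
  rcases le_or_gt (k : ℝ) t with htk' | htk'
  · exact ⟨k, hk, le_rfl, by rw [abs_le]; constructor <;> linarith⟩
  refine ⟨⌈t⌉₊, Nat.one_le_iff_ne_zero.mpr (by positivity), Nat.ceil_le.mpr htk'.le, ?_⟩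
  have hceil_lt : (⌈t⌉₊ : ℝ) < t + 1 := Nat.ceil_lt_add_one ht₀
  rw [abs_le]
  constructor <;> linarith [Nat.le_ceil t]

lemma exists_abs_sub_le_of_mem_Icc {y : ℝ} (hy : y ∈ Set.Icc (-1 : ℝ) 1) {k : ℕ} (hk : 1 ≤ k) :
    ∃ m : ℕ, 1 ≤ m ∧ m ≤ k ∧
      |y - (4 * (k : ℝ) - 8 * m + 1) / (4 * k + 1)| ≤ 8 / (4 * k + 1) := by
  have hden : (0 : ℝ) < 4 * k + 1 := by positivity
  set t : ℝ := (4 * k + 1) * (1 - y) / 8 with ht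
  have ht₀ : 0 ≤ t := by have := hy.2; positivity
  have htk : t ≤ k + 1 := by rw [ht, div_le_iff₀ (by norm_num)]; nlinarith [hy.1]
  obtain ⟨m, hm₁, hmk, hmt⟩ := exists_nat_mem_Icc_abs_sub_le_one hk ht₀ htk
  refine ⟨m, hm₁, hmk, ?_⟩
  have hdiff : y - (4 * (k : ℝ) - 8 * m + 1) / (4 * k + 1) = 8 * ((m : ℝ) - t) / (4 * k + 1) := by
    field_simp [ht]; ring
  rw [hdiff, abs_div, abs_mul, abs_of_pos hden, abs_of_pos (by norm_num : (0 : ℝ) < 8)]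
  gcongr
  linarith

theorem stmt_5 :
    Set.Icc (-1:ℝ) 1 ⊆ closure {x : ℝ | ∃ k m : ℕ, 1 ≤ m ∧ m ≤ k ∧
      x = (4*(k:ℝ) - 8*m + 1) / (4*k + 1)} := by
  intro y hy
  rw [Metric.mem_closure_iff]
  intro ε hε
  obtain ⟨k, hk⟩ := exists_nat_gt (8 / ε)
  have hk₁ : 0 < k := Nat.cast_pos.mp ((div_pos (by norm_num) hε).trans hk)
  obtain ⟨m, hm₁, hmk, hclose⟩ := exists_abs_sub_le_of_mem_Icc hy hk₁
  refine ⟨_, ⟨k, m, hm₁, hmk, rfl⟩, hclose.trans_lt ?_⟩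
  rw [div_lt_iff₀ (by positivity), mul_comm, ← div_lt_iff₀ hε]
  linarith
end

section
/- Let n ∈ ℕ and define x_j = cos²((n+1-j)π/(2n+2)) for j = 1, ..., n. Then for every k with 1 ≤ k ≤ n, the alternating sum xₙᵏ - x_{n-1}ᵏ + x_{n-2}ᵏ - ... + (-1)^{n-1} x₁ᵏ equals 1/2. -/
/-!
Put `N = n + 1`, `θₘ = mπ/(2N)` and `ζ = exp (2πi/(2N))`. Then
`(-1)ᵐ (2 cos θₘ)^(2k) = (ζᵐ)^(N-k) (1 + ζᵐ)^(2k)` is the value at `ζᵐ` of a polynomial with no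
constant term and of degree `N + k < 2N`; summing over all `2N`-th roots of unity kills each of its
monomials, so `∑_{m<2N} (-1)ᵐ cos^(2k) θₘ = 0`. The terms `m` and `2N - m` agree, `m = 0`
contributes `1` and `m = N` contributes `0`, so the sum over `0 < m < N` is `-1/2`; the substitution
`m = n + 1 - j` turns it into the claim.
-/

open Real Finset Polynomial

theorem IsPrimitiveRoot.geom_sum_pow_eq_zero {R : Type*} [CommRing R] [IsDomain R] {ζ : R}
    {n a : ℕ} (hζ : IsPrimitiveRoot ζ n) (ha : a ≠ 0) (han : a < n) :
    ∑ m ∈ range n, (ζ ^ a) ^ m = 0 := by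
  refine eq_zero_of_ne_zero_of_mul_left_eq_zero
    (sub_ne_zero_of_ne (hζ.pow_ne_one_of_pos_of_lt ha han)) ?_
  rw [mul_geom_sum, ← pow_mul, mul_comm, pow_mul, hζ.pow_eq_one, one_pow, sub_self]

theorem IsPrimitiveRoot.sum_eval_pow_eq_zero {R : Type*} [CommRing R] [IsDomain R] {ζ : R}
    {n : ℕ} (hζ : IsPrimitiveRoot ζ n) {p : R[X]} (h0 : p.coeff 0 = 0)
    (hdeg : p.natDegree < n) : ∑ m ∈ range n, p.eval (ζ ^ m) = 0 := by
  simp_rw [eval_eq_sum_range' hdeg]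
  rw [sum_comm]
  refine sum_eq_zero fun a ha => ?_
  rcases eq_or_ne a 0 with rfl | ha0
  · simp [h0]
  · simp_rw [pow_right_comm ζ _ a]
    rw [← mul_sum, hζ.geom_sum_pow_eq_zero ha0 (mem_range.mp ha), mul_zero]

theorem Finset.sum_range_two_mul_eq_of_reflect {M : Type*} [AddCommMonoid M] {N : ℕ}
    (hN : N ≠ 0) (f : ℕ → M) (hf : ∀ m ∈ Ico 1 N, f (2 * N - m) = f m) :
    ∑ m ∈ range (2 * N), f m = f 0 + f N + 2 • ∑ m ∈ Ico 1 N, f m := by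
  have hreflect : ∑ m ∈ Ico (N + 1) (2 * N), f m = ∑ m ∈ Ico 1 N, f m := by
    rw [← sum_congr rfl hf, sum_Ico_reflect f 1 (by omega : N ≤ 2 * N + 1), Nat.add_sub_cancel,
      show 2 * N + 1 - N = N + 1 by omega]
  rw [range_eq_Ico, sum_eq_sum_Ico_succ_bot (by omega), ← sum_Ico_consecutive f (by omega : 1 ≤ N)
    (by omega : N ≤ 2 * N), sum_eq_sum_Ico_succ_bot (by omega : N < 2 * N), hreflect, two_nsmul]
  abel

theorem neg_one_pow_mul_cos_pow_mul_four_pow {N k : ℕ} (hN : N ≠ 0) (hk : k ≤ N) (m : ℕ) :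
    (-1 : ℂ) ^ m * Complex.cos (m * π / (2 * N)) ^ (2 * k) * 4 ^ k =
      (Complex.exp (2 * π * Complex.I / (2 * N : ℕ)) ^ m) ^ (N - k) *
        (1 + Complex.exp (2 * π * Complex.I / (2 * N : ℕ)) ^ m) ^ (2 * k) := by
  set θ : ℂ := m * π / (2 * N)
  have hN' : (N : ℂ) ≠ 0 := Nat.cast_ne_zero.mpr hN
  have hroot : Complex.exp (2 * π * Complex.I / (2 * N : ℕ)) ^ m =
      Complex.exp (θ * Complex.I) ^ 2 := by
    rw [← Complex.exp_nat_mul, ← Complex.exp_nat_mul]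
    congr 1
    push_cast [θ]
    field_simp
  have hsign : (-1 : ℂ) ^ m = Complex.exp (θ * Complex.I) ^ (2 * N) := by
    rw [← Complex.exp_pi_mul_I, ← Complex.exp_nat_mul, ← Complex.exp_nat_mul]
    congr 1
    push_cast [θ]
    field_simp
  have hcos : 2 * Complex.exp (θ * Complex.I) * Complex.cos θ =
      1 + Complex.exp (θ * Complex.I) ^ 2 := by
    rw [Complex.cos, neg_mul, Complex.exp_neg]
    field_simp
    ring
  obtain ⟨j, rfl⟩ := Nat.exists_eq_add_of_le' hk
  rw [hroot, hsign, Nat.add_sub_cancel, ← hcos, show (4 : ℂ) ^ k = 2 ^ (2 * k) by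
    rw [pow_mul]; norm_num]
  ring

theorem sum_range_neg_one_pow_mul_cos_pow_eq_zero {N k : ℕ} (hk : k < N) :
    ∑ m ∈ range (2 * N), (-1 : ℝ) ^ m * Real.cos (m * π / (2 * N)) ^ (2 * k) = 0 := by
  have hζ := Complex.isPrimitiveRoot_exp (2 * N) (by omega)
  have h0 : (X ^ (N - k) * (1 + X) ^ (2 * k) : ℂ[X]).coeff 0 = 0 := by
    rw [mul_coeff_zero, coeff_X_pow, if_neg (by omega), zero_mul]
  have hdeg : (X ^ (N - k) * (1 + X) ^ (2 * k) : ℂ[X]).natDegree < 2 * N := by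
    have : (X ^ (N - k) * (1 + X) ^ (2 * k) : ℂ[X]).natDegree ≤ N - k + 2 * k := by
      compute_degree
    omega
  have hsum := hζ.sum_eval_pow_eq_zero h0 hdeg
  simp only [eval_mul, eval_pow, eval_X, eval_add, eval_one,
    ← neg_one_pow_mul_cos_pow_mul_four_pow (by omega : N ≠ 0) hk.le, ← sum_mul] at hsum
  exact_mod_cast (mul_eq_zero.mp hsum).resolve_right (by norm_num)

theorem sum_Ico_neg_one_pow_mul_cos_pow {N k : ℕ} (hk0 : k ≠ 0) (hk : k < N) :
    ∑ m ∈ Ico 1 N, (-1 : ℝ) ^ m * Real.cos (m * π / (2 * N)) ^ (2 * k) = -1 / 2 := by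
  have hN : (N : ℝ) ≠ 0 := by exact_mod_cast (by omega : N ≠ 0)
  have hreflect : ∀ m ∈ Ico 1 N,
      (-1 : ℝ) ^ (2 * N - m) * Real.cos ((2 * N - m : ℕ) * π / (2 * N)) ^ (2 * k) =
        (-1 : ℝ) ^ m * Real.cos (m * π / (2 * N)) ^ (2 * k) := by
    intro m hm
    have hm : m ≤ 2 * N := by simp only [mem_Ico] at hm; omega
    have hangle : ((2 * N - m : ℕ) : ℝ) * π / (2 * N) = π - m * π / (2 * N) := by
      push_cast [hm]
      field_simp
    have hsign : (-1 : ℝ) ^ (2 * N - m) = (-1) ^ m := by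
      rw [neg_one_pow_eq_pow_mod_two, neg_one_pow_eq_pow_mod_two (n := m)]
      congr 1
      omega
    rw [hangle, Real.cos_pi_sub, hsign, (even_two_mul k).neg_pow]
  have hfold := sum_range_two_mul_eq_of_reflect (N := N) (by omega)
    (fun m => (-1 : ℝ) ^ m * Real.cos (m * π / (2 * N)) ^ (2 * k)) hreflect
  have hcos : Real.cos ((N : ℕ) * π / (2 * N)) = 0 := by
    rw [show (N : ℝ) * π / (2 * N) = π / 2 by field_simp, Real.cos_pi_div_two]
  rw [sum_range_neg_one_pow_mul_cos_pow_eq_zero hk, hcos, zero_pow (by omega)] at hfold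
  simp only [pow_zero, CharP.cast_eq_zero, zero_mul, zero_div, Real.cos_zero, one_pow, mul_one,
    mul_zero, add_zero, nsmul_eq_mul, Nat.cast_ofNat] at hfold
  linarith

theorem stmt_8 (n : ℕ) (k : ℕ) (hk1 : 1 ≤ k) (hkn : k ≤ n) :
    ∑ j ∈ Finset.Icc 1 n,
      (-1 : ℝ) ^ (n - j) * (Real.cos (((n:ℝ) + 1 - j) * π / (2*n + 2)) ^ 2) ^ k
      = 1 / 2 := by
  have hreindex : ∀ j ∈ Ico 1 (n + 1),
      (-1 : ℝ) ^ (n - j) * (Real.cos (((n:ℝ) + 1 - j) * π / (2*n + 2)) ^ 2) ^ k =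
        -((-1 : ℝ) ^ (n + 1 - j) * Real.cos ((n + 1 - j : ℕ) * π / (2 * (n + 1 : ℕ))) ^ (2 * k)) := by
    intro j hj
    have hj : j ≤ n := by simp only [mem_Ico] at hj; omega
    rw [Nat.sub_add_comm hj, pow_succ (-1 : ℝ), ← pow_mul (Real.cos _)]
    push_cast [hj, Nat.cast_sub (by omega : j ≤ n + 1)]
    ring_nf
  rw [← Ico_add_one_right_eq_Icc, sum_congr rfl hreindex, sum_neg_distrib,
    sum_Ico_reflect (fun m => (-1 : ℝ) ^ m * Real.cos (m * π / (2 * (n + 1 : ℕ))) ^ (2 * k)) 1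
      (by omega : n + 1 ≤ n + 1 + 1), Nat.add_sub_cancel, Nat.add_sub_cancel_left,
    sum_Ico_neg_one_pow_mul_cos_pow (by omega) (by omega)]
  norm_num
end

section
/- Suppose 0 < θ < 1, δᵢ ∈ {1,-1} for i = 1,...,n, and 0 ≤ x₁ ≤ x₂ ≤ ... ≤ xₙ ≤ 1 satisfy δₙxₙᵏ + δ_{n-1}x_{n-1}ᵏ + ... + δ₁x₁ᵏ = θ for all 1 ≤ k ≤ n. Then δᵢ = (-1)^{n-i} for all i, and 0 < x₁ < x₂ < ... < xₙ < 1 (all inequalities strict). -/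
/-! For a polynomial `q` of degree `< n`, the moment equations give
`∑ δᵢ xᵢ q(xᵢ) = θ q(1)`. Taking `q = ∏ (X - y)` over the distinct values `y ∉ {0, 1}` of the `xᵢ`
turns this into `θ = ∑_{xᵢ = 1} δᵢ ∈ ℤ`, which is impossible unless there are at least `n` such
values; so the `xᵢ` are distinct and lie in `(0, 1)`. Then `q = ∏_{j ≠ i} (X - xⱼ)` isolates
`δᵢ xᵢ ∏_{j ≠ i} (xᵢ - xⱼ) = θ ∏_{j ≠ i} (1 - xⱼ) > 0`, and the product on the left has the sign
`(-1)^(n-1-i)` of the number of `xⱼ` above `xᵢ`. -/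

open Polynomial Finset

section Moments

variable {ι : Type*} [Fintype ι] {n : ℕ} {θ : ℝ} {δ x : ι → ℝ}

theorem sum_mul_mul_eval_eq_of_moments
    (hsum : ∀ k : ℕ, 1 ≤ k → k ≤ n → ∑ i, δ i * x i ^ k = θ) {q : ℝ[X]} (hq : q.natDegree < n) :
    ∑ i, δ i * (x i * q.eval (x i)) = θ * q.eval 1 := by
  simp_rw [eval_eq_sum_range' hq, one_pow, mul_one, mul_sum]
  rw [sum_comm]
  refine sum_congr rfl fun k hk => ?_
  rw [← hsum (k + 1) (by omega) (by simpa using hk), sum_mul]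
  exact sum_congr rfl fun i _ => by ring

theorem le_card_erase_zero_one_of_moments
    (hsum : ∀ k : ℕ, 1 ≤ k → k ≤ n → ∑ i, δ i * x i ^ k = θ)
    (hδ : ∀ i, δ i ∈ Set.range ((↑) : ℤ → ℝ)) (hθ : θ ∉ Set.range ((↑) : ℤ → ℝ)) :
    n ≤ #(((univ.image x).erase 0).erase 1) := by
  set S := ((univ.image x).erase 0).erase 1
  by_contra! hS
  have key := sum_mul_mul_eval_eq_of_moments hsum
    (q := ∏ y ∈ S, (X - C y)) (by rwa [natDegree_finsetProd_X_sub_C_eq_card])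
  have hterm : ∀ i, x i * (∏ y ∈ S, (X - C y)).eval (x i) =
      if x i = 1 then (∏ y ∈ S, (X - C y)).eval 1 else 0 := by
    intro i
    split_ifs with h1
    · rw [h1, one_mul]
    · by_cases h0 : x i = 0
      · rw [h0, zero_mul]
      · have hxS : x i ∈ S := by simp [S, h0, h1]
        rw [eval_prod, prod_eq_zero hxS (by simp), mul_zero]
  have hne : (∏ y ∈ S, (X - C y)).eval 1 ≠ 0 := by
    rw [eval_prod]
    exact prod_ne_zero_iff.2 fun y hy => by
      rw [eval_sub, eval_X, eval_C]
      exact sub_ne_zero.2 (ne_of_mem_erase hy).symm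
  simp_rw [hterm, mul_ite, mul_zero, ← sum_filter, ← sum_mul] at key
  have hint : ∑ i ∈ univ.filter (x · = 1), δ i ∈ Set.range ((↑) : ℤ → ℝ) := by
    refine sum_induction _ (· ∈ Set.range ((↑) : ℤ → ℝ)) ?_ ⟨0, Int.cast_zero⟩ fun i _ => hδ i
    rintro _ _ ⟨a, rfl⟩ ⟨b, rfl⟩
    exact ⟨a + b, Int.cast_add a b⟩
  exact hθ (mul_right_cancel₀ hne key ▸ hint)

theorem injective_and_mem_Ioo_of_moments (hn : Fintype.card ι ≤ n)
    (hsum : ∀ k : ℕ, 1 ≤ k → k ≤ n → ∑ i, δ i * x i ^ k = θ)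
    (hδ : ∀ i, δ i ∈ Set.range ((↑) : ℤ → ℝ)) (hθ : θ ∉ Set.range ((↑) : ℤ → ℝ))
    (hx : ∀ i, x i ∈ Set.Icc 0 1) :
    Function.Injective x ∧ ∀ i, x i ∈ Set.Ioo 0 1 := by
  have hle := le_card_erase_zero_one_of_moments hsum hδ hθ
  have h1 := card_erase_le (s := (univ.image x).erase 0) (a := 1)
  have h0 := card_erase_le (s := univ.image x) (a := 0)
  have hI : #(univ.image x) ≤ Fintype.card ι := card_image_le.trans_eq card_univ
  have hinj : Set.InjOn x (univ : Finset ι) := card_image_iff.1 (by rw [card_univ]; omega)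
  have hx0 : ∀ i, x i ≠ 0 := fun i hi =>
    (card_erase_lt_of_mem (hi ▸ mem_image_of_mem x (mem_univ i))).ne (by omega)
  have hx1 : ∀ i, x i ≠ 1 := fun i hi =>
    (card_erase_lt_of_mem (mem_erase.2 ⟨one_ne_zero, hi ▸ mem_image_of_mem x (mem_univ i)⟩)).ne
      (by omega)
  refine ⟨fun i j h => hinj (by simp) (by simp) h, fun i => ⟨?_, ?_⟩⟩
  · exact (hx i).1.lt_of_ne (hx0 i).symm
  · exact (hx i).2.lt_of_ne (hx1 i)

theorem mul_prod_erase_eq_of_moments [DecidableEq ι] (hn : Fintype.card ι ≤ n)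
    (hsum : ∀ k : ℕ, 1 ≤ k → k ≤ n → ∑ i, δ i * x i ^ k = θ) (i : ι) :
    δ i * (x i * ∏ j ∈ univ.erase i, (x i - x j)) = θ * ∏ j ∈ univ.erase i, (1 - x j) := by
  have hq : (∏ j ∈ univ.erase i, (X - C (x j))).natDegree < n := by
    rw [natDegree_finsetProd_X_sub_C_eq_card, card_erase_of_mem (mem_univ i), card_univ]
    have := Fintype.card_pos_iff.2 ⟨i⟩
    omega
  have key := sum_mul_mul_eval_eq_of_moments hsum hq
  rw [sum_eq_single i
    (fun j _ hji => by simp [eval_prod, prod_eq_zero (mem_erase.2 ⟨hji, mem_univ j⟩)]) (by simp)]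
    at key
  simpa [eval_prod] using key

end Moments

theorem neg_one_pow_mul_prod_erase_sub_pos {n : ℕ} {x : Fin n → ℝ} (hx : StrictMono x)
    (i : Fin n) : 0 < (-1) ^ (n - 1 - (i : ℕ)) * ∏ j ∈ univ.erase i, (x i - x j) := by
  have hIoi : (univ.erase i).filter (i < ·) = Ioi i := by
    ext j; simpa using ne_of_gt
  have hlow : 0 < ∏ j ∈ (univ.erase i).filter (¬ i < ·), (x i - x j) :=
    prod_pos fun j hj => by
      simp only [mem_filter, mem_erase, mem_univ, and_true, not_lt] at hj
      exact sub_pos.2 (hx (hj.2.lt_of_ne hj.1))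
  have hhigh : ∏ j ∈ Ioi i, (x i - x j) = (-1) ^ (n - 1 - (i : ℕ)) * ∏ j ∈ Ioi i, (x j - x i) := by
    rw [← Fin.card_Ioi, ← prod_neg]
    simp
  have hpos : 0 < ∏ j ∈ Ioi i, (x j - x i) := prod_pos fun j hj => sub_pos.2 (hx (mem_Ioi.1 hj))
  rw [← prod_filter_mul_prod_filter_not (univ.erase i) (i < ·), hIoi, hhigh, ← mul_assoc,
    ← mul_assoc, ← pow_add, ← two_mul, pow_mul, neg_one_sq, one_pow, one_mul]
  exact mul_pos hpos hlow

theorem eq_neg_one_pow_of_moments {n : ℕ} {θ : ℝ} {δ x : Fin n → ℝ} (hθ : 0 < θ)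
    (hδ : ∀ i, δ i = 1 ∨ δ i = -1) (hx : StrictMono x) (hx01 : ∀ i, x i ∈ Set.Ioo 0 1)
    (hsum : ∀ k : ℕ, 1 ≤ k → k ≤ n → ∑ i, δ i * x i ^ k = θ) (i : Fin n) :
    δ i = (-1) ^ (n - 1 - (i : ℕ)) := by
  set s : ℝ := (-1) ^ (n - 1 - (i : ℕ))
  set P := ∏ j ∈ univ.erase i, (x i - x j)
  have heq := mul_prod_erase_eq_of_moments (by simp) hsum i
  have hrhs : 0 < θ * ∏ j ∈ univ.erase i, (1 - x j) :=
    mul_pos hθ (prod_pos fun j _ => sub_pos.2 (hx01 j).2)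
  have hs : s * s = 1 := by rw [← pow_add, ← two_mul, pow_mul, neg_one_sq, one_pow]
  have hpos : 0 < δ i * s := by
    have hprod : δ i * s * (x i * (s * P)) = θ * ∏ j ∈ univ.erase i, (1 - x j) := by
      linear_combination heq + δ i * x i * P * hs
    exact pos_of_mul_pos_left (hprod ▸ hrhs)
      (mul_pos (hx01 i).1 (neg_one_pow_mul_prod_erase_sub_pos hx i)).le
  rcases hδ i with h | h <;> rcases neg_one_pow_eq_or ℝ (n - 1 - (i : ℕ)) with hs' | hs' <;>
    simp only [s, h, hs'] at hpos ⊢ <;> norm_num at hpos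

theorem stmt_12_general (n : ℕ) (θ : ℝ) (hθ0 : 0 < θ) (hθ1 : θ < 1)
    (δ x : Fin n → ℝ) (hδ : ∀ i, δ i = 1 ∨ δ i = -1)
    (hx : ∀ i, x i ∈ Set.Icc (0:ℝ) 1) (hmono : Monotone x)
    (hsum : ∀ k : ℕ, 1 ≤ k → k ≤ n → ∑ i, δ i * x i ^ k = θ) :
    (∀ i : Fin n, δ i = (-1 : ℝ) ^ (n - 1 - (i : ℕ))) ∧
      StrictMono x ∧ ∀ i, x i ∈ Set.Ioo (0:ℝ) 1 := by
  have hδℤ : ∀ i, δ i ∈ Set.range ((↑) : ℤ → ℝ) := fun i => by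
    rcases hδ i with h | h
    exacts [⟨1, by simp [h]⟩, ⟨-1, by simp [h]⟩]
  have hθℤ : θ ∉ Set.range ((↑) : ℤ → ℝ) := by
    rintro ⟨m, rfl⟩
    have : (0 : ℤ) < m := by exact_mod_cast hθ0
    have : m < 1 := by exact_mod_cast hθ1
    omega
  obtain ⟨hinj, hx01⟩ := injective_and_mem_Ioo_of_moments (by simp) hsum hδℤ hθℤ hx
  have hstrict := hmono.strictMono_of_injective hinj
  exact ⟨eq_neg_one_pow_of_moments hθ0 hδ hstrict hx01 hsum, hstrict, hx01⟩

theorem stmt_12 (n : ℕ) (hn : 1 ≤ n) (θ : ℝ) (hθ0 : 0 < θ) (hθ1 : θ < 1)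
    (δ x : Fin n → ℝ) (hδ : ∀ i, δ i = 1 ∨ δ i = -1)
    (hx : ∀ i, x i ∈ Set.Icc (0:ℝ) 1) (hmono : Monotone x)
    (hsum : ∀ k : ℕ, 1 ≤ k → k ≤ n → ∑ i, δ i * x i ^ k = θ) :
    (∀ i : Fin n, δ i = (-1 : ℝ) ^ (n - 1 - (i : ℕ))) ∧
      StrictMono x ∧ ∀ i, x i ∈ Set.Ioo (0:ℝ) 1 :=
  stmt_12_general n θ hθ0 hθ1 δ x hδ hx hmono hsum
end

section
/- Let 0 < θ < 1 and suppose ξ₁,...,ξ_{n-m}, η₁,...,η_m ∈ [0,1] satisfy ξ₁ᵏ + ... + ξ_{n-m}ᵏ - (η₁ᵏ + ... + η_mᵏ) = θ for all 1 ≤ k ≤ n. Then m = ⌊n/2⌋, and when labelled in increasing order the two families strictly interleave: 0 < η₁ < ξ₁ < η₂ < ξ₂ < ... < η_m < ξ_m < 1 if n = 2m, and 0 < ξ₁ < η₁ < ξ₂ < η₂ < ... < η_m < ξ_{m+1} < 1 if n = 2m+1. -/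
/-!
The hypothesis says that the signed measure `μ = ∑ δ_{ξᵢ} - ∑ δ_{ηⱼ} - θ δ₁` has vanishing moments
of orders `1, …, n`, so `∫ P dμ = 0` for every polynomial `P` of degree `≤ n` with `P 0 = 0`.
Testing against `X * ∏ (X - r)`, the product running over all nonzero atoms but one, shows that if
`μ` had at most `n` nonzero atoms it would vanish away from `0`; since `θ ∉ ℤ` the mass at `1` is
nonzero, so the `n + 1` atoms are distinct and positive. Testing against the product over all atoms
but two adjacent ones `a < b`, which has the same sign at `a` and at `b`, shows that adjacent masses
have opposite signs. As the top mass is `-θ < 0`, the sign of each mass is fixed by the rank of its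
atom, and reading off the ranks of the masses `+1` (the `ξᵢ`) and `-1` (the `ηⱼ`) gives both
`m = n / 2` and the interleaving.
-/

open Polynomial Finset

def MomentsVanish {ι : Type*} [Fintype ι] (x c : ι → ℝ) (n : ℕ) : Prop :=
  ∀ k, 1 ≤ k → k ≤ n → ∑ i, c i * x i ^ k = 0

namespace MomentsVanish

variable {ι : Type*} [Fintype ι] {x c : ι → ℝ} {n : ℕ}

theorem sum_mul_eval_eq_zero (h : MomentsVanish x c n) {P : ℝ[X]} (hP : P.natDegree ≤ n)
    (hP0 : P.coeff 0 = 0) : ∑ i, c i * P.eval (x i) = 0 := by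
  simp_rw [eval_eq_sum_range' (Nat.lt_succ_of_le hP), Finset.mul_sum]
  rw [Finset.sum_comm]
  refine Finset.sum_eq_zero fun k hk => ?_
  rcases Nat.eq_zero_or_pos k with rfl | hk0
  · simp [hP0]
  · calc ∑ i, c i * (P.coeff k * x i ^ k) = P.coeff k * ∑ i, c i * x i ^ k := by
          rw [Finset.mul_sum]; exact Finset.sum_congr rfl fun i _ => by ring
      _ = 0 := by rw [h k hk0 (Nat.lt_succ_iff.mp (Finset.mem_range.mp hk)), mul_zero]

theorem sum_mul_mul_prod_eq_zero (h : MomentsVanish x c n) {κ : Type*} (R : Finset κ)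
    (v : κ → ℝ) (hR : #R < n) : ∑ i, c i * (x i * ∏ l ∈ R, (x i - v l)) = 0 := by
  have hdeg : (X * Lagrange.nodal R v).natDegree ≤ n := by
    rw [natDegree_X_mul Lagrange.nodal_ne_zero, Lagrange.natDegree_nodal]; omega
  simpa [Lagrange.eval_nodal] using h.sum_mul_eval_eq_zero hdeg (coeff_X_mul_zero _)

theorem sum_fiber_eq_zero (h : MomentsVanish x c n)
    (hcard : #((univ.image x).erase 0) ≤ n) {t : ℝ} (ht : t ≠ 0) :
    ∑ i with x i = t, c i = 0 := by
  by_cases htx : t ∈ univ.image x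
  swap
  · exact Finset.sum_eq_zero fun i hi =>
      absurd ((mem_filter.mp hi).2 ▸ mem_image_of_mem x (mem_univ i)) htx
  set R := ((univ.image x).erase 0).erase t
  have hR : #R < n := (card_erase_lt_of_mem (mem_erase.mpr ⟨ht, htx⟩)).trans_le hcard
  have hQ : t * ∏ r ∈ R, (t - r) ≠ 0 :=
    mul_ne_zero ht (prod_ne_zero_iff.mpr fun r hr => sub_ne_zero.mpr (ne_of_mem_erase hr).symm)
  have hsum : ∑ i, c i * (x i * ∏ r ∈ R, (x i - r)) = 0 := h.sum_mul_mul_prod_eq_zero R id hR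
  have hfiber : ∀ i, c i * (x i * ∏ r ∈ R, (x i - r))
      = if x i = t then c i * (t * ∏ r ∈ R, (t - r)) else 0 := by
    intro i
    split_ifs with hi
    · rw [hi]
    by_cases hi0 : x i = 0
    · simp [hi0]
    · have : x i ∈ R := mem_erase.mpr ⟨hi, mem_erase.mpr ⟨hi0, mem_image_of_mem x (mem_univ i)⟩⟩
      rw [prod_eq_zero this (sub_self _), mul_zero, mul_zero]
  simp_rw [hfiber, ← Finset.sum_filter, ← Finset.sum_mul] at hsum
  exact (mul_eq_zero.mp hsum).resolve_right hQ

theorem injective_and_ne_zero (h : MomentsVanish x c n) (hcard : Fintype.card ι ≤ n + 1)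
    (i₀ : ι) (hx₀ : x i₀ ≠ 0) (hc₀ : ∑ i with x i = x i₀, c i ≠ 0) :
    Function.Injective x ∧ ∀ i, x i ≠ 0 := by
  have hlt : n < #((univ.image x).erase 0) :=
    not_le.mp fun hle => hc₀ (h.sum_fiber_eq_zero hle hx₀)
  have himage : #(univ.image x) ≤ Fintype.card ι := card_image_le
  have herase : #((univ.image x).erase 0) ≤ #(univ.image x) := card_erase_le
  refine ⟨fun i j hij => ?_, fun i hi => ?_⟩
  · have hinj := Finset.card_image_iff.mp (show #(univ.image x) = #(univ : Finset ι) by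
      rw [card_univ]; omega)
    exact hinj (mem_univ i) (mem_univ j) hij
  · have := card_erase_of_mem (hi ▸ mem_image_of_mem x (mem_univ i) : (0:ℝ) ∈ univ.image x)
    omega

theorem mul_neg_of_strictMono {N : ℕ} {y v : Fin (N + 1) → ℝ} (h : MomentsVanish y v N)
    (hy : StrictMono y) (hy0 : 0 < y 0) (s : Fin N) (hv : v s.succ ≠ 0) :
    v s.castSucc * v s.succ < 0 := by
  set a := s.castSucc
  set b := s.succ
  have hab : a ≠ b := Fin.castSucc_lt_succ.ne
  set R := (univ.erase a).erase b
  have hR : #R < N := by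
    rw [card_erase_of_mem (mem_erase.mpr ⟨hab.symm, mem_univ b⟩), card_erase_of_mem (mem_univ a),
      card_univ, Fintype.card_fin]
    omega
  -- `Q` vanishes at every atom except `y a` and `y b`, and has the same sign at both of them
  -- because no atom lies strictly between them.
  set Q : ℝ → ℝ := fun t => t * ∏ l ∈ R, (t - y l)
  have hsum : v a * Q (y a) + v b * Q (y b) = 0 := by
    rw [← h.sum_mul_mul_prod_eq_zero R y hR]
    refine (Fintype.sum_eq_add (f := fun i => v i * Q (y i)) a b hab fun l hl => ?_).symm
    have hlR : l ∈ R := mem_erase.mpr ⟨hl.2, mem_erase.mpr ⟨hl.1, mem_univ l⟩⟩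
    simp only [Q, prod_eq_zero (f := fun l' => y l - y l') hlR (sub_self (y l)), mul_zero]
  have hQ : 0 < Q (y a) * Q (y b) := by
    have hpos : ∀ l, 0 < y l := fun l => hy0.trans_le (hy.monotone (Fin.zero_le l))
    simp only [Q, mul_mul_mul_comm, ← prod_mul_distrib]
    refine mul_pos (mul_pos (hpos a) (hpos b)) (prod_pos fun l hl => ?_)
    have hla : l ≠ a := ne_of_mem_erase (mem_of_mem_erase hl)
    have hlb : l ≠ b := ne_of_mem_erase hl
    rcases lt_or_gt_of_ne hla with hlt | hgt
    · have hlb' : l < b := hlt.trans Fin.castSucc_lt_succ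
      exact mul_pos (sub_pos.mpr (hy hlt)) (sub_pos.mpr (hy hlb'))
    · have hbl : b < l := (Fin.castSucc_lt_iff_succ_le.mp hgt).lt_of_ne hlb.symm
      exact mul_pos_of_neg_of_neg (sub_neg.mpr (hy hgt)) (sub_neg.mpr (hy hbl))
  have hb : v b * Q (y b) ≠ 0 := mul_ne_zero hv (right_ne_zero_of_mul hQ.ne')
  have hprod : v a * v b * (Q (y a) * Q (y b)) < 0 :=
    calc v a * v b * (Q (y a) * Q (y b)) = (v a * Q (y a)) * (v b * Q (y b)) := by ring
      _ = -(v b * Q (y b)) ^ 2 := by rw [eq_neg_of_add_eq_zero_left hsum]; ring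
      _ < 0 := neg_neg_of_pos (by positivity)
  exact neg_of_mul_neg_left hprod hQ.le

end MomentsVanish

theorem Fin.pos_iff_odd_of_mul_neg {N : ℕ} {f : Fin (N + 1) → ℝ}
    (halt : ∀ s : Fin N, f s.castSucc * f s.succ < 0) (hlast : f (Fin.last N) < 0)
    (s : Fin (N + 1)) : 0 < f s ↔ Odd (N - s) := by
  induction s using Fin.reverseInduction with
  | last => simp [not_lt.mpr hlast.le]
  | cast s ih =>
    have hN : N - s = N - (s + 1 : ℕ) + 1 := by omega
    rw [Fin.val_succ] at ih
    rw [Fin.val_castSucc, hN, Nat.odd_add_one, ← ih]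
    rcases mul_neg_iff.mp (halt s) with ⟨h1, h2⟩ | ⟨h1, h2⟩
    · simp [h1, not_lt.mpr h2.le]
    · simp [not_lt.mpr h1.le, h2]

theorem Function.Injective.exists_equiv_fin_strictMono {ι β : Type*} [Fintype ι] [LinearOrder β]
    {x : ι → β} (hx : Function.Injective x) {N : ℕ} (hN : Fintype.card ι = N) :
    ∃ e : Fin N ≃ ι, StrictMono (x ∘ e) := by
  let : LinearOrder ι := LinearOrder.lift' x hx
  exact ⟨(Fintype.orderIsoFinOfCardEq ι hN).toEquiv, (Fintype.orderIsoFinOfCardEq ι hN).strictMono⟩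

theorem MomentsVanish.exists_rank {ι : Type*} [Fintype ι] {x c : ι → ℝ} {n : ℕ}
    (h : MomentsVanish x c n) (hcard : Fintype.card ι = n + 1) (hinj : Function.Injective x)
    (hpos : ∀ i, 0 < x i) (hc : ∀ i, c i ≠ 0) (htop : ∀ i, (∀ j, x j ≤ x i) → c i < 0) :
    ∃ p : ι ≃ Fin (n + 1), (∀ i j, x i < x j ↔ p i < p j) ∧ ∀ i, 0 < c i ↔ Odd (n - p i) := by
  obtain ⟨e, he⟩ := hinj.exists_equiv_fin_strictMono hcard
  have hmom : MomentsVanish (x ∘ e) (c ∘ e) n := fun k hk1 hkn =>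
    (e.sum_comp fun i => c i * x i ^ k).trans (h k hk1 hkn)
  have hlast : c (e (Fin.last n)) < 0 :=
    htop _ fun j => e.apply_symm_apply j ▸ he.monotone (Fin.le_last (e.symm j))
  have hsign := Fin.pos_iff_odd_of_mul_neg
    (fun s => hmom.mul_neg_of_strictMono he (hpos _) s (hc _)) hlast
  refine ⟨e.symm, fun i j => ?_, fun i => ?_⟩
  · rw [← he.lt_iff_lt]; simp
  · simpa using hsign (e.symm i)

theorem Nat.eq_two_mul_add_of_strictMono {k r : ℕ} {p : Fin k → ℕ} (hp : StrictMono p)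
    (hpar : ∀ j, p j % 2 = r) (hclosed : ∀ j s, s < p j → s % 2 = r → ∃ j', p j' = s)
    (j : Fin k) : p j = 2 * j + r := by
  induction j using WellFoundedLT.induction with
  | _ j ih =>
  have hj := hpar j
  have hlow : 2 * j + r ≤ p j := by
    rcases Nat.eq_zero_or_pos (j : ℕ) with h0 | hj0
    · omega
    · have hprev : (⟨j - 1, by omega⟩ : Fin k) < j := Fin.lt_def.mpr (by simp only; omega)
      have h1 := ih _ hprev
      have h2 := hp hprev
      simp only at h1 h2
      omega
  by_contra hne
  obtain ⟨j', hj'⟩ := hclosed j (p j - 2) (by omega) (by omega)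
  have hlt : j' < j := hp.lt_iff_lt.mp (by omega)
  have := ih j' hlt
  have : (j' : ℕ) < j := hlt
  omega

section Atoms

variable {a b : ℕ}

-- The measure `∑ δ_{ξᵢ} - ∑ δ_{ηⱼ} - θ δ₁` as a weighted family; the index `none` is the atom `1`.
def atoms (ξ : Fin a → ℝ) (η : Fin b → ℝ) : Option (Fin a ⊕ Fin b) → ℝ :=
  fun o => o.elim 1 (Sum.elim ξ η)

def masses (a b : ℕ) (θ : ℝ) : Option (Fin a ⊕ Fin b) → ℝ :=
  fun o => o.elim (-θ) (Sum.elim 1 (-1))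

variable {ξ : Fin a → ℝ} {η : Fin b → ℝ} {θ : ℝ}

theorem momentsVanish_atoms {n : ℕ}
    (hsum : ∀ k : ℕ, 1 ≤ k → k ≤ n → (∑ i, ξ i ^ k) - (∑ j, η j ^ k) = θ) :
    MomentsVanish (atoms ξ η) (masses a b θ) n := by
  intro k hk1 hkn
  have := hsum k hk1 hkn
  simp only [atoms, masses, Fintype.sum_option, Fintype.sum_sum_type, Option.elim, Sum.elim_inl,
    Sum.elim_inr, Pi.one_apply, Pi.neg_apply, one_pow, mul_one, one_mul, neg_one_mul,
    Finset.sum_neg_distrib]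
  linarith

theorem sum_masses_fiber_one_ne_zero (hθ0 : 0 < θ) (hθ1 : θ < 1) :
    ∑ o with atoms ξ η o = 1, masses a b θ o ≠ 0 := by
  have hint : ∀ s : Fin a ⊕ Fin b, (if atoms ξ η (some s) = 1 then masses a b θ (some s) else 0)
      = ((if atoms ξ η (some s) = 1 then Sum.elim 1 (-1) s else 0 : ℤ) : ℝ) := by
    rintro (i | j) <;> split_ifs <;> simp [masses]
  rw [Finset.sum_filter, Fintype.sum_option]
  simp only [hint, ← Int.cast_sum]
  -- the fiber sum is an integer minus `θ`
  generalize (∑ s : Fin a ⊕ Fin b, _ : ℤ) = z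
  simp only [atoms, masses, Option.elim, if_true]
  intro h
  have hz0 : (0 : ℝ) < z := by linarith
  have hz1 : (z : ℝ) < 1 := by linarith
  have : 0 < z := by exact_mod_cast hz0
  have : z < 1 := by exact_mod_cast hz1
  omega

theorem masses_pos_iff (hθ : 0 ≤ θ) (o : Option (Fin a ⊕ Fin b)) :
    0 < masses a b θ o ↔ ∃ i, o = some (.inl i) := by
  rcases o with _ | i | j <;> simp [masses, hθ]

theorem masses_ne_zero (hθ : θ ≠ 0) (o : Option (Fin a ⊕ Fin b)) : masses a b θ o ≠ 0 := by
  rcases o with _ | i | j <;> simp [masses, hθ]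

theorem exists_rank_atoms {n : ℕ} (hn : a + b = n) (hθ0 : 0 < θ) (hθ1 : θ < 1)
    (hξ : ∀ i, ξ i ∈ Set.Icc (0:ℝ) 1) (hη : ∀ j, η j ∈ Set.Icc (0:ℝ) 1)
    (hsum : ∀ k : ℕ, 1 ≤ k → k ≤ n → (∑ i, ξ i ^ k) - (∑ j, η j ^ k) = θ) :
    Function.Injective (atoms ξ η) ∧ (∀ o, 0 < atoms ξ η o) ∧
      ∃ p : Option (Fin a ⊕ Fin b) ≃ Fin (n + 1),
        (∀ o o', atoms ξ η o < atoms ξ η o' ↔ p o < p o') ∧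
        (∀ o, 0 < masses a b θ o ↔ Odd (n - p o)) ∧ p none = Fin.last n := by
  have hcard : Fintype.card (Option (Fin a ⊕ Fin b)) = n + 1 := by simp [hn]
  have hmom := momentsVanish_atoms hsum
  have hIcc : ∀ o, atoms ξ η o ∈ Set.Icc (0:ℝ) 1 := by
    rintro (_ | i | j)
    · simp [atoms]
    · exact hξ i
    · exact hη j
  obtain ⟨hinj, hne⟩ :=
    hmom.injective_and_ne_zero hcard.le none one_ne_zero (sum_masses_fiber_one_ne_zero hθ0 hθ1)
  have hpos : ∀ o, 0 < atoms ξ η o := fun o => (hIcc o).1.lt_of_ne' (hne o)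
  have htop : ∀ o, atoms ξ η none ≤ atoms ξ η o → o = none := fun o h =>
    hinj (le_antisymm (hIcc o).2 h)
  obtain ⟨p, hp, hsign⟩ := hmom.exists_rank hcard hinj hpos (masses_ne_zero hθ0.ne') fun o ho => by
    rw [htop o (ho none)]
    simpa [masses] using hθ0
  refine ⟨hinj, hpos, p, hp, hsign, le_antisymm (Fin.le_last _) ?_⟩
  simpa using not_lt.mp ((hp none _).not.mp (not_lt.mpr (hIcc (p.symm (Fin.last n))).2))

section Rank

variable {n : ℕ} {p : Option (Fin a ⊕ Fin b) ≃ Fin (n + 1)}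

theorem rank_inl_eq (hθ : 0 ≤ θ) (hinj : Function.Injective (atoms ξ η)) (hξ : Monotone ξ)
    (hp : ∀ o o', atoms ξ η o < atoms ξ η o' ↔ p o < p o')
    (hsign : ∀ o, 0 < masses a b θ o ↔ Odd (n - p o)) (i : Fin a) :
    (p (some (.inl i)) : ℕ) = 2 * i + (n + 1) % 2 := by
  have hξinj : Function.Injective ξ := fun i j h => by
    simpa using hinj (a₁ := some (.inl i)) (a₂ := some (.inl j)) h
  refine Nat.eq_two_mul_add_of_strictMono (p := fun i => (p (some (.inl i)) : ℕ))
    (fun i j hij => (hp _ _).mp (hξ.strictMono_of_injective hξinj hij)) (fun j => ?_)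
    (fun j s hs hpar => ?_) i
  · have hodd := (hsign (some (.inl j))).mp (by simp [masses])
    have := (p (some (.inl j))).is_lt
    rw [Nat.odd_iff] at hodd
    omega
  · obtain ⟨i', hi'⟩ := (masses_pos_iff hθ (p.symm ⟨s, by omega⟩)).mp
      ((hsign _).mpr (by simp [Nat.odd_iff]; omega))
    exact ⟨i', by simp [← hi']⟩

theorem rank_inr_eq (hinj : Function.Injective (atoms ξ η)) (hη : Monotone η)
    (hp : ∀ o o', atoms ξ η o < atoms ξ η o' ↔ p o < p o')
    (hsign : ∀ o, 0 < masses a b θ o ↔ Odd (n - p o)) (hnone : p none = Fin.last n)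
    (j : Fin b) : (p (some (.inr j)) : ℕ) = 2 * j + n % 2 := by
  have hηinj : Function.Injective η := fun i j h => by
    simpa using hinj (a₁ := some (.inr i)) (a₂ := some (.inr j)) h
  refine Nat.eq_two_mul_add_of_strictMono (p := fun j => (p (some (.inr j)) : ℕ))
    (fun i j hij => (hp _ _).mp (hη.strictMono_of_injective hηinj hij)) (fun j => ?_)
    (fun j s hs hpar => ?_) j
  · have heven := (hsign (some (.inr j))).not.mp (by simp [masses])
    have := (p (some (.inr j))).is_lt
    rw [Nat.odd_iff] at heven
    omega
  · have hs' : s < n + 1 := by omega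
    have hneg := (hsign (p.symm ⟨s, hs'⟩)).not.mpr (by simp [Nat.odd_iff]; omega)
    rcases ho : p.symm ⟨s, hs'⟩ with _ | i' | j'
    · have := congrArg Fin.val (p.symm_apply_eq.mp ho)
      simp [hnone] at this
      have := (p (some (.inr j))).is_lt
      omega
    · simp [ho, masses] at hneg
    · exact ⟨j', by simp [← ho]⟩

theorem eq_div_two_of_rank_eq (hn : a + b = n) (hnone : p none = Fin.last n)
    (hξp : ∀ i : Fin a, (p (some (.inl i)) : ℕ) = 2 * i + (n + 1) % 2)
    (hηp : ∀ j : Fin b, (p (some (.inr j)) : ℕ) = 2 * j + n % 2) : b = n / 2 := by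
  have ha : ∀ i (hi : i < a), 2 * i + (n + 1) % 2 ≤ n := fun i hi =>
    hξp ⟨i, hi⟩ ▸ Nat.lt_succ_iff.mp (p _).is_lt
  have hb : ∀ j (hj : j < b), 2 * j + n % 2 < n := fun j hj =>
    hηp ⟨j, hj⟩ ▸ Fin.val_lt_last (hnone ▸ p.injective.ne (Option.some_ne_none _))
  rcases Nat.eq_zero_or_pos a with h | h <;> rcases Nat.eq_zero_or_pos b with h' | h'
  · omega
  · have := hb (b - 1) (by omega); omega
  · have := ha (a - 1) (by omega); omega
  · have := ha (a - 1) (by omega); have := hb (b - 1) (by omega); omega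

end Rank

theorem stmt_13 (n m : ℕ) (hmn : m ≤ n) (θ : ℝ) (hθ0 : 0 < θ) (hθ1 : θ < 1)
    (ξ : Fin (n - m) → ℝ) (η : Fin m → ℝ)
    (hξ : ∀ i, ξ i ∈ Set.Icc (0:ℝ) 1) (hη : ∀ j, η j ∈ Set.Icc (0:ℝ) 1)
    (hξmono : Monotone ξ) (hηmono : Monotone η)
    (hsum : ∀ k : ℕ, 1 ≤ k → k ≤ n → (∑ i, ξ i ^ k) - (∑ j, η j ^ k) = θ) :
    m = n / 2 ∧
      (∀ i, ξ i ∈ Set.Ioo (0:ℝ) 1) ∧ (∀ j, η j ∈ Set.Ioo (0:ℝ) 1) ∧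
      (Even n → ∀ (i : Fin m) (j : Fin (n - m)),
        ((i : ℕ) ≤ (j : ℕ) → η i < ξ j) ∧ ((j : ℕ) < (i : ℕ) → ξ j < η i)) ∧
      (¬ Even n → ∀ (i : Fin (n - m)) (j : Fin m),
        ((i : ℕ) ≤ (j : ℕ) → ξ i < η j) ∧ ((j : ℕ) < (i : ℕ) → η j < ξ i)) := by
  obtain ⟨hinj, hpos, p, hp, hsign, hnone⟩ :=
    exists_rank_atoms (by omega) hθ0 hθ1 hξ hη hsum
  have hξp := rank_inl_eq hθ0.le hinj hξmono hp hsign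
  have hηp := rank_inr_eq hinj hηmono hp hsign hnone
  have hlt1 : ∀ o, o ≠ none → atoms ξ η o < 1 := fun o ho =>
    (hp o none).mpr (hnone ▸ Fin.lt_last_iff_ne_last.mpr (hnone ▸ p.injective.ne ho))
  have hlt : ∀ o o', (p o : ℕ) < p o' → atoms ξ η o < atoms ξ η o' := fun o o' h =>
    (hp o o').mpr h
  refine ⟨eq_div_two_of_rank_eq (by omega) hnone hξp hηp,
    fun i => ⟨hpos (some (.inl i)), hlt1 (some (.inl i)) (Option.some_ne_none _)⟩,
    fun j => ⟨hpos (some (.inr j)), hlt1 (some (.inr j)) (Option.some_ne_none _)⟩,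
    fun hn i j => ⟨fun hij => ?_, fun hij => ?_⟩, fun hn i j => ⟨fun hij => ?_, fun hij => ?_⟩⟩
  · exact hlt (some (.inr i)) (some (.inl j)) (by rw [hηp, hξp]; grind)
  · exact hlt (some (.inl j)) (some (.inr i)) (by rw [hηp, hξp]; grind)
  · exact hlt (some (.inl i)) (some (.inr j)) (by rw [hηp, hξp]; grind)
  · exact hlt (some (.inr j)) (some (.inl i)) (by rw [hηp, hξp]; grind)
end Atoms
end

section
/- Let P⁺ and P⁻ be monic real polynomials of degrees n-m and m, with all roots ξ₁,...,ξ_{n-m} of P⁺ and η₁,...,η_m of P⁻. Then the power sums satisfy ξ₁ᵏ + ... + ξ_{n-m}ᵏ - (η₁ᵏ + ... + η_mᵏ) = θ for all 1 ≤ k ≤ n if and only if the reciprocal polynomials satisfy P⁺*(x)/P⁻*(x) = (1-x)^θ + O(x^{n+1}) as x → 0. -/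
/-!
Near `x = 0` every factor `1 - a x` is positive, so
`P⁺*(x) / P⁻*(x) = (1 - x)^θ · exp (L x)` with
`L x = ∑ log (1 - ξᵢ x) - ∑ log (1 - ηⱼ x) - θ log (1 - x)`.
Since `(1 - x)^θ → 1` and `exp t - 1 ~ t`, the difference `P⁺*/P⁻* - (1 - x)^θ` is asymptotically
equivalent to `L`. Expanding `log (1 - a x) = -∑ₖ aᵏ xᵏ / k` shows that `L` is analytic at `0` with
`k`-th coefficient `(θ - pₖ) / k`, where `pₖ` is the difference of power sums, and an analytic
function is `O(x^N)` exactly when its first `N` coefficients vanish.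
-/

open Polynomial Asymptotics Filter Topology

namespace Polynomial

variable {R ι : Type*} [CommRing R]

theorem natDegree_prod_X_sub_C_le (s : Finset ι) (a : ι → R) :
    (∏ i ∈ s, (X - C (a i))).natDegree ≤ s.card := by
  simpa using (natDegree_prod_le s _).trans
    (Finset.sum_le_card_nsmul s _ 1 fun i _ => natDegree_X_sub_C_le (a i))

theorem reflect_prod_X_sub_C (s : Finset ι) (a : ι → R) :
    (∏ i ∈ s, (X - C (a i))).reflect s.card = ∏ i ∈ s, (1 - C (a i) * X) := by
  induction s using Finset.cons_induction with
  | empty => simp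
  | cons i s hi ih =>
    rw [Finset.prod_cons, Finset.prod_cons, Finset.card_cons, add_comm,
      reflect_mul _ _ (natDegree_X_sub_C_le _) (natDegree_prod_X_sub_C_le s a), ih]
    simp

theorem eval_reflect_prod_X_sub_C {N : ℕ} (a : Fin N → R) (x : R) :
    ((∏ i, (X - C (a i))).reflect N).eval x = ∏ i, (1 - a i * x) := by
  simpa [eval_prod] using congrArg (eval x) (reflect_prod_X_sub_C Finset.univ a)

end Polynomial

theorem FormalMultilinearSeries.ofScalars_compContinuousLinearMap_smul_id {𝕜 : Type*}
    [NontriviallyNormedField 𝕜] (c : ℕ → 𝕜) (a : 𝕜) :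
    (ofScalars 𝕜 c).compContinuousLinearMap (a • ContinuousLinearMap.id 𝕜 𝕜) =
      ofScalars 𝕜 fun k => a ^ k * c k := by
  ext n
  simp only [compContinuousLinearMap_apply, Function.comp_def, _root_.smul_apply,
    ContinuousLinearMap.id_apply, ofScalars_apply_eq, smul_eq_mul]
  ring

theorem forall_coeff_eq_zero_of_isBigO_pow {𝕜 : Type*} [NontriviallyNormedField 𝕜] {N : ℕ}
    {c : ℕ → 𝕜} (h : (fun y => ∑ k ∈ Finset.range N, c k * y ^ k) =O[𝓝[≠] 0] (· ^ N)) :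
    ∀ k < N, c k = 0 := by
  induction N generalizing c with
  | zero => intro k hk; omega
  | succ N ih =>
    have hc0 : c 0 = 0 := by
      have hP : Tendsto (fun y => ∑ k ∈ Finset.range (N + 1), c k * y ^ k) (𝓝[≠] 0)
          (𝓝 (c 0)) := by
        have hcont : Continuous fun y : 𝕜 => ∑ k ∈ Finset.range (N + 1), c k * y ^ k := by
          fun_prop
        simpa [Finset.sum_range_succ'] using (hcont.tendsto 0).mono_left nhdsWithin_le_nhds
      have hpow : Tendsto (fun y : 𝕜 => y ^ (N + 1)) (𝓝[≠] 0) (𝓝 0) :=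
        ((continuous_pow (N + 1)).tendsto' 0 0 (zero_pow N.succ_ne_zero)).mono_left
          nhdsWithin_le_nhds
      exact tendsto_nhds_unique hP (h.trans_tendsto hpow)
    have hshift : ∀ y : 𝕜, ∑ k ∈ Finset.range (N + 1), c k * y ^ k =
        y * ∑ k ∈ Finset.range N, c (k + 1) * y ^ k := by
      intro y
      rw [Finset.sum_range_succ', hc0, Finset.mul_sum]
      simp only [pow_succ, add_zero, zero_mul]
      exact Finset.sum_congr rfl fun k _ => by ring
    have hQ : (fun y => ∑ k ∈ Finset.range N, c (k + 1) * y ^ k) =O[𝓝[≠] 0] (· ^ N) := by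
      refine ((isBigO_refl (fun y : 𝕜 => y⁻¹) _).mul h).congr' ?_ ?_ <;>
        filter_upwards [self_mem_nhdsWithin] with y hy
      · rw [hshift, inv_mul_cancel_left₀ hy]
      · rw [pow_succ', inv_mul_cancel_left₀ hy]
    intro k hk
    cases k with
    | zero => exact hc0
    | succ k => exact ih hQ k (by omega)

theorem HasFPowerSeriesAt.isBigO_pow_iff {𝕜 : Type*} [NontriviallyNormedField 𝕜] {f : 𝕜 → 𝕜}
    {c : ℕ → 𝕜} (hf : HasFPowerSeriesAt f (.ofScalars 𝕜 c) 0) (N : ℕ) :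
    f =O[𝓝 0] (· ^ N) ↔ ∀ k < N, c k = 0 := by
  have hrem : (fun y => f y - ∑ k ∈ Finset.range N, c k * y ^ k) =O[𝓝 0] (· ^ N) := by
    simpa [FormalMultilinearSeries.partialSum, FormalMultilinearSeries.ofScalars_apply_eq,
      ← norm_pow, mul_comm] using hf.isBigO_sub_partialSum_pow N
  constructor
  · intro hO
    refine forall_coeff_eq_zero_of_isBigO_pow (((hO.sub hrem).congr_left fun y => ?_).mono
      nhdsWithin_le_nhds)
    exact sub_sub_cancel _ _
  · intro hc
    refine hrem.congr_left fun y => ?_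
    rw [Finset.sum_eq_zero fun k hk => by rw [hc k (Finset.mem_range.mp hk), zero_mul], sub_zero]

theorem Real.hasFPowerSeriesAt_log_one_sub_mul (a : ℝ) :
    HasFPowerSeriesAt (fun x => log (1 - a * x)) (.ofScalars ℝ fun k => -(a ^ k / k)) 0 := by
  set u : ℝ →L[ℝ] ℝ := (-a) • ContinuousLinearMap.id ℝ ℝ
  have hlog := hasFPowerSeriesAt_log_one_add
  rw [← map_zero u] at hlog
  have := hlog.compContinuousLinearMap
  rw [FormalMultilinearSeries.ofScalars_compContinuousLinearMap_smul_id] at this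
  convert this using 1
  · funext x; simp [u, sub_eq_add_neg]
  · congr 1; funext k
    rw [neg_div, mul_neg, mul_div_assoc', ← mul_pow, neg_mul_neg, mul_one]

theorem Real.hasFPowerSeriesAt_sum_log_one_sub_mul {ι : Type*} (s : Finset ι) (a : ι → ℝ) :
    HasFPowerSeriesAt (fun x => ∑ i ∈ s, log (1 - a i * x))
      (.ofScalars ℝ fun k => -((∑ i ∈ s, a i ^ k) / k)) 0 := by
  induction s using Finset.cons_induction with
  | empty =>
    simp only [Finset.sum_empty, zero_div, neg_zero, ← Pi.zero_def,
      FormalMultilinearSeries.ofScalars_series_eq_zero_of_scalar_zero,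
      ← constFormalMultilinearSeries_zero (𝕜 := ℝ) (E := ℝ) (F := ℝ)]
    exact hasFPowerSeriesAt_const
  | cons i s hi ih =>
    convert (hasFPowerSeriesAt_log_one_sub_mul (a i)).add ih using 1
    · funext x; simp [Finset.sum_cons]
    · rw [← FormalMultilinearSeries.ofScalars_add]
      congr 1; funext k
      simp only [Finset.sum_cons, add_div, neg_add, Pi.add_apply]

theorem isEquivalent_exp_sub_one {α : Type*} {l : Filter α} {h : α → ℝ}
    (hh : Tendsto h l (𝓝 0)) : (fun x => Real.exp (h x) - 1) ~[l] h := by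
  have := hasDerivAt_iff_isLittleO_nhds_zero.mp (Real.hasDerivAt_exp 0)
  exact IsLittleO.isEquivalent (by simpa [Pi.sub_def, Function.comp_def] using this.comp_tendsto hh)

theorem eventually_one_sub_mul_pos (a : ℝ) : ∀ᶠ x in 𝓝 0, 0 < 1 - a * x :=
  ((by fun_prop : Continuous fun x : ℝ => 1 - a * x).tendsto' 0 1 (by simp)).eventually
    (lt_mem_nhds one_pos)

theorem eventually_prod_one_sub_mul_eq_exp {ι : Type*} (s : Finset ι) (a : ι → ℝ) :
    ∀ᶠ x in 𝓝 0, ∏ i ∈ s, (1 - a i * x) = Real.exp (∑ i ∈ s, Real.log (1 - a i * x)) := by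
  have hpos : ∀ᶠ x in 𝓝 0, ∀ i ∈ s, 0 < 1 - a i * x :=
    (eventually_all_finset s).mpr fun i _ => eventually_one_sub_mul_pos (a i)
  filter_upwards [hpos] with x hx
  rw [Real.exp_sum]
  exact Finset.prod_congr rfl fun i hi => (Real.exp_log (hx i hi)).symm

noncomputable def logQuotient {ι κ : Type*} [Fintype ι] [Fintype κ] (ξ : ι → ℝ) (η : κ → ℝ)
    (θ x : ℝ) : ℝ :=
  ∑ i, Real.log (1 - ξ i * x) - ∑ j, Real.log (1 - η j * x) - θ * Real.log (1 - x)

section logQuotient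

variable {ι κ : Type*} [Fintype ι] [Fintype κ] (ξ : ι → ℝ) (η : κ → ℝ) (θ : ℝ)

-- At `k = 0` the coefficient is `(θ - p₀) / 0 = 0` by Lean's convention, matching
-- `logQuotient ξ η θ 0 = 0`.
theorem hasFPowerSeriesAt_logQuotient :
    HasFPowerSeriesAt (logQuotient ξ η θ)
      (.ofScalars ℝ fun k => (θ - (∑ i, ξ i ^ k - ∑ j, η j ^ k)) / k) 0 := by
  have := ((Real.hasFPowerSeriesAt_sum_log_one_sub_mul Finset.univ ξ).sub
    (Real.hasFPowerSeriesAt_sum_log_one_sub_mul Finset.univ η)).sub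
    ((Real.hasFPowerSeriesAt_log_one_sub_mul 1).const_smul (c := θ))
  rw [← FormalMultilinearSeries.ofScalars_smul, ← FormalMultilinearSeries.ofScalars_sub,
    ← FormalMultilinearSeries.ofScalars_sub] at this
  convert this using 1
  · funext x; simp [logQuotient]
  · congr 1; funext k; simp only [one_pow, Pi.sub_apply, Pi.smul_apply, smul_eq_mul]; ring

theorem isEquivalent_prod_div_prod_sub_rpow :
    (fun x => (∏ i, (1 - ξ i * x)) / (∏ j, (1 - η j * x)) - (1 - x) ^ θ) ~[𝓝 0]
      logQuotient ξ η θ := by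
  have hL : Tendsto (logQuotient ξ η θ) (𝓝 0) (𝓝 0) := by
    simpa [logQuotient] using (hasFPowerSeriesAt_logQuotient ξ η θ).continuousAt.tendsto
  have hR : (fun x : ℝ => (1 - x) ^ θ) ~[𝓝 0] fun _ => 1 := by
    refine (isEquivalent_const_iff_tendsto one_ne_zero).mpr ?_
    have : ContinuousAt (fun x : ℝ => (1 - x) ^ θ) 0 :=
      (continuousAt_const.sub continuousAt_id).rpow_const (by simp)
    simpa using this.tendsto
  have hident : ∀ᶠ x in 𝓝 0, (1 - x) ^ θ * (Real.exp (logQuotient ξ η θ x) - 1) =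
      (∏ i, (1 - ξ i * x)) / (∏ j, (1 - η j * x)) - (1 - x) ^ θ := by
    filter_upwards [eventually_prod_one_sub_mul_eq_exp Finset.univ ξ,
      eventually_prod_one_sub_mul_eq_exp Finset.univ η,
      eventually_one_sub_mul_pos 1] with x hξ hη h1
    rw [one_mul] at h1
    rw [hξ, hη, Real.rpow_def_of_pos h1, mul_sub, mul_one, ← Real.exp_add,
      ← Real.exp_sub, logQuotient]
    ring_nf
  have := (hR.mul (isEquivalent_exp_sub_one hL)).congr_left hident
  rwa [show ((fun _ => (1 : ℝ)) * logQuotient ξ η θ) = logQuotient ξ η θ from one_mul _] at this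

end logQuotient

theorem stmt_14_general (n m : ℕ) (θ : ℝ)
    (ξ : Fin (n - m) → ℝ) (η : Fin m → ℝ) (Pp Pm : Polynomial ℝ)
    (hPp : Pp = ∏ i, (X - C (ξ i))) (hPm : Pm = ∏ j, (X - C (η j))) :
    (∀ k : ℕ, 1 ≤ k → k ≤ n → (∑ i, ξ i ^ k) - (∑ j, η j ^ k) = θ) ↔
      (fun x : ℝ =>
          (Pp.reflect (n - m)).eval x / (Pm.reflect m).eval x - (1 - x) ^ θ)
        =O[nhds 0] fun x : ℝ => x ^ (n + 1) := by
  simp_rw [hPp, hPm, eval_reflect_prod_X_sub_C]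
  rw [(isEquivalent_prod_div_prod_sub_rpow ξ η θ).isTheta.isBigO_congr_left,
    (hasFPowerSeriesAt_logQuotient ξ η θ).isBigO_pow_iff]
  constructor
  · intro hsum k hk
    rcases k.eq_zero_or_pos with rfl | hk0
    · simp
    · rw [hsum k hk0 (by omega), sub_self, zero_div]
  · intro hcoeff k hk0 hkn
    have := hcoeff k (by omega)
    rw [div_eq_zero_iff, sub_eq_zero, Nat.cast_eq_zero] at this
    exact (this.resolve_right (by omega)).symm

theorem stmt_14 (n m : ℕ) (hmn : m ≤ n) (θ : ℝ)
    (ξ : Fin (n - m) → ℝ) (η : Fin m → ℝ) (Pp Pm : Polynomial ℝ)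
    (hPp : Pp = ∏ i, (X - C (ξ i))) (hPm : Pm = ∏ j, (X - C (η j))) :
    (∀ k : ℕ, 1 ≤ k → k ≤ n → (∑ i, ξ i ^ k) - (∑ j, η j ^ k) = θ) ↔
      (fun x : ℝ =>
          (Pp.reflect (n - m)).eval x / (Pm.reflect m).eval x - (1 - x) ^ θ)
        =O[nhds 0] fun x : ℝ => x ^ (n + 1) :=
  stmt_14_general n m θ ξ η Pp Pm hPp hPm
end

section
/- For θ real and n ∈ ℕ, the unique monic polynomial P of degree n whose roots ξ₁,...,ξₙ satisfy ξ₁ᵏ + ... + ξₙᵏ = θ for all 1 ≤ k ≤ n is P(x) = Σ_{i=0}ⁿ (-1)^i C(θ,i) x^{n-i}, where C(θ,i) = θ(θ-1)...(θ-i+1)/i! is the generalized binomial coefficient. Equivalently, its reciprocal polynomial P*(x) agrees with the Taylor series of (1-x)^θ through order xⁿ. -/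
/-!
Newton's identities `k eₖ = (-1)^(k+1) ∑_{i<k} (-1)^i eᵢ p_{k-i}` tie the elementary
symmetric functions `e₁, …, eₙ` of the roots to their power sums `p₁, …, pₙ` triangularly:
given agreement below `k`, two solutions of the recurrence have the same `eₖ` iff they have
the same `pₖ`. The sequence `eₖ = C(θ, k)` with constant power sums `pₖ = θ` solves the
recurrence, which is `(k + 1) C(θ, k + 1) = (θ - k) C(θ, k)` telescoped. Hence the power
sums of the roots are all `θ` iff `eₖ(roots) = C(θ, k)` for `k ≤ n`, which by Vieta's formulas
says exactly that `P` has the stated coefficients.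
-/

open Polynomial

/-- The generalized binomial coefficient `C(t, i) = t(t-1)⋯(t-i+1)/i!`. -/
noncomputable def gchoose (t : ℝ) (i : ℕ) : ℝ :=
  (∏ j ∈ Finset.range i, (t - j)) / (Nat.factorial i)

open Finset

def NewtonRecurrence {R : Type*} [CommRing R] (e p : ℕ → R) : Prop :=
  ∀ k : ℕ, (k : R) * e k = (-1) ^ (k + 1) * ∑ i ∈ range k, (-1) ^ i * e i * p (k - i)

namespace NewtonRecurrence

variable {R S : Type*} [CommRing R] [CommRing S] {e p e' p' : ℕ → R}

theorem map (h : NewtonRecurrence e p) (f : R →+* S) : NewtonRecurrence (f ∘ e) (f ∘ p) := by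
  intro k
  simpa using congrArg f (h k)

theorem succ_eq_iff [IsDomain R] [CharZero R] (h : NewtonRecurrence e p)
    (h' : NewtonRecurrence e' p')
    (he₀ : e 0 = 1) (he₀' : e' 0 = 1) {m : ℕ} (he : ∀ i ≤ m, e i = e' i)
    (hp : ∀ j, 1 ≤ j → j ≤ m → p j = p' j) :
    e (m + 1) = e' (m + 1) ↔ p (m + 1) = p' (m + 1) := by
  have htail : ∑ i ∈ range m, (-1) ^ (i + 1) * e (i + 1) * p (m - i)
      = ∑ i ∈ range m, (-1) ^ (i + 1) * e' (i + 1) * p' (m - i) := by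
    refine sum_congr rfl fun i hi => ?_
    have hi := mem_range.1 hi
    rw [he (i + 1) hi, hp (m - i) (by omega) (by omega)]
  -- only the `i = 0` terms of the two recurrences at `m + 1` differ
  have hdiff : ((m + 1 : ℕ) : R) * (e (m + 1) - e' (m + 1)) =
      (-1) ^ m * (p (m + 1) - p' (m + 1)) := by
    have hk := h (m + 1)
    have hk' := h' (m + 1)
    rw [sum_range_succ', Nat.sub_zero, he₀] at hk
    rw [sum_range_succ', Nat.sub_zero, he₀'] at hk'
    simp only [Nat.succ_sub_succ] at hk hk'
    rw [htail] at hk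
    linear_combination hk - hk'
  have hm : ((m + 1 : ℕ) : R) ≠ 0 := Nat.cast_ne_zero.2 m.succ_ne_zero
  rw [← sub_eq_zero, ← sub_eq_zero (a := p _), ← mul_right_inj' hm, hdiff, mul_zero, mul_eq_zero,
    or_iff_right (pow_ne_zero _ (neg_ne_zero.2 one_ne_zero))]

theorem forall_eq_iff [IsDomain R] [CharZero R] (h : NewtonRecurrence e p)
    (h' : NewtonRecurrence e' p')
    (he₀ : e 0 = 1) (he₀' : e' 0 = 1) (n : ℕ) :
    (∀ k, 1 ≤ k → k ≤ n → p k = p' k) ↔ ∀ k ≤ n, e k = e' k := by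
  induction n with
  | zero =>
    refine ⟨fun _ k hk => ?_, fun _ k h₁ h₂ => absurd h₂ (by omega)⟩
    rw [Nat.le_zero.1 hk, he₀, he₀']
  | succ m ih =>
    have hstep := h.succ_eq_iff h' he₀ he₀' (m := m)
    constructor
    · intro hp k hk
      have he := ih.1 fun j h₁ h₂ => hp j h₁ (by omega)
      rcases hk.lt_or_eq with hk | rfl
      · exact he k (by omega)
      · exact (hstep he fun j h₁ h₂ => hp j h₁ (by omega)).2 (hp _ (by omega) le_rfl)
    · intro he k h₁ hk
      have hp := ih.2 fun j hj => he j (by omega)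
      rcases hk.lt_or_eq with hk | rfl
      · exact hp k h₁ (by omega)
      · exact (hstep (fun j hj => he j (by omega)) hp).1 (he _ le_rfl)

end NewtonRecurrence

theorem Multiset.newtonRecurrence_esymm {R : Type*} [CommRing R] (s : Multiset R) :
    NewtonRecurrence s.esymm fun k => (s.map (· ^ k)).sum := by
  classical
  intro k
  have hpsum : ∀ j, MvPolynomial.aeval (fun x : s => (x : R)) (MvPolynomial.psum s R j)
      = (s.map (· ^ j)).sum := by
    intro j
    simp only [MvPolynomial.psum, map_sum, map_pow, MvPolynomial.aeval_X]
    rw [Finset.sum_eq_multiset_sum, Multiset.map_univ s (· ^ j)]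
  have h := congrArg (MvPolynomial.aeval fun x : s => (x : R))
    (MvPolynomial.mul_esymm_eq_sum s R k)
  simp only [map_mul, map_pow, map_sum, map_natCast, map_neg, map_one,
    MvPolynomial.aeval_esymm_eq_multiset_esymm, hpsum, Multiset.map_univ_coe] at h
  rw [h, sum_filter, Nat.sum_antidiagonal_eq_sum_range_succ_mk, sum_range_succ,
    if_neg (lt_irrefl k), add_zero]
  congr 1
  exact sum_congr rfl fun i hi => if_pos (mem_range.1 hi)

theorem succ_mul_gchoose_succ (θ : ℝ) (k : ℕ) :
    (k + 1 : ℝ) * gchoose θ (k + 1) = (θ - k) * gchoose θ k := by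
  simp only [gchoose, prod_range_succ, Nat.factorial_succ, Nat.cast_mul, Nat.cast_add_one]
  field_simp

theorem newtonRecurrence_gchoose (θ : ℝ) : NewtonRecurrence (gchoose θ) fun _ => θ := by
  intro k
  rw [← sum_mul]
  induction k with
  | zero => simp
  | succ k ih =>
    rw [sum_range_succ]
    push_cast
    linear_combination succ_mul_gchoose_succ θ k - ih
      - θ * gchoose θ k * (Even.neg_one_pow ⟨k, by ring⟩ : (-1 : ℝ) ^ (k * 2) = 1)

namespace Polynomial

variable {R : Type*} [CommRing R]

theorem coeff_sum_range_C_mul_X_pow_sub (a : ℕ → R) {n k : ℕ} (hk : k ≤ n) :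
    (∑ i ∈ range (n + 1), C (a i) * X ^ (n - i)).coeff (n - k) = a k := by
  rw [finsetSum_coeff, sum_eq_single_of_mem k (mem_range.2 (by omega))]
  · rw [coeff_C_mul_X_pow, if_pos rfl]
  · intro i hi hik
    rw [coeff_C_mul_X_pow, if_neg]
    have := mem_range.1 hi
    omega

theorem sum_range_C_mul_X_pow_sub_eq_iff (a b : ℕ → R) (n : ℕ) :
    ∑ i ∈ range (n + 1), C (a i) * X ^ (n - i) =
        ∑ i ∈ range (n + 1), C (b i) * X ^ (n - i) ↔
      ∀ i ≤ n, a i = b i := by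
  refine ⟨fun h i hi => ?_, fun h => sum_congr rfl fun i hi => ?_⟩
  · rw [← coeff_sum_range_C_mul_X_pow_sub a hi, h, coeff_sum_range_C_mul_X_pow_sub b hi]
  · rw [h i (Nat.lt_succ_iff.1 (mem_range.1 hi))]

theorem Monic.eq_sum_range_C_esymm_roots [IsDomain R] {P : R[X]} (hP : P.Monic)
    (hroots : P.roots.card = P.natDegree) :
    P = ∑ j ∈ range (P.natDegree + 1),
      C ((-1) ^ j * P.roots.esymm j) * X ^ (P.natDegree - j) := by
  conv_lhs => rw [← prod_multiset_X_sub_C_of_monic_of_roots_card_eq hP hroots,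
    Multiset.prod_X_sub_X_eq_sum_esymm, hroots]
  simp only [C_mul, C_pow, C_neg, C_1, mul_assoc]

end Polynomial

theorem stmt_15_general (n : ℕ) (θ : ℝ) (P : Polynomial ℂ)
    (hmonic : P.Monic) (hdeg : P.natDegree = n) :
    (∀ k : ℕ, 1 ≤ k → k ≤ n → (P.roots.map (· ^ k)).sum = (θ : ℂ)) ↔
      P = ∑ i ∈ Finset.range (n + 1),
        C ((((-1 : ℝ) ^ i * gchoose θ i : ℝ) : ℂ)) * X ^ (n - i) := by
  have hP := hmonic.eq_sum_range_C_esymm_roots (IsAlgClosed.splits P).natDegree_eq_card_roots.symm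
  rw [hdeg] at hP
  have hnewton := P.roots.newtonRecurrence_esymm.forall_eq_iff
    ((newtonRecurrence_gchoose θ).map Complex.ofRealHom) (by simp [Multiset.esymm])
    (by simp [gchoose]) n
  conv_rhs => rw [hP, sum_range_C_mul_X_pow_sub_eq_iff]
  refine hnewton.trans (forall₂_congr fun i _ => ?_)
  push_cast
  exact (mul_right_inj' (pow_ne_zero i (neg_ne_zero.2 one_ne_zero))).symm

theorem stmt_15 (n : ℕ) (hn : 1 ≤ n) (θ : ℝ) (P : Polynomial ℂ)
    (hmonic : P.Monic) (hdeg : P.natDegree = n) :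
    (∀ k : ℕ, 1 ≤ k → k ≤ n → (P.roots.map (· ^ k)).sum = (θ : ℂ)) ↔
      P = ∑ i ∈ Finset.range (n + 1),
        C ((((-1 : ℝ) ^ i * gchoose θ i : ℝ) : ℂ)) * X ^ (n - i) :=
  stmt_15_general n θ P hmonic hdeg
end

section
/- For m ≥ 1 and θ ∈ (0,1), the determinant of the m×m matrix K with entries K_{ij} = C(θ, m+i-j) (generalized binomial coefficients, for the case n = 2m) equals θ^m (θ²-1)^{m-1} (θ²-4)^{m-2} ··· (θ²-(m-1)²) divided by m^m (m²-1)^{m-1} ··· (m²-(m-1)²), and in particular is nonzero. -/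
open Finset Matrix

theorem prod_range_mul_eq_mul_prod_range {M : Type*} [CommMonoid M] {f g : ℕ → M}
    (h : ∀ i, f (i + 1) = g i) (n : ℕ) :
    (∏ i ∈ range n, f i) * f n = f 0 * ∏ i ∈ range n, g i := by
  rw [← prod_range_succ, prod_range_succ', mul_comm, funext h]

theorem prod_range_sub_eq_prod_Icc {M : Type*} [CommMonoid M] (f : ℕ → M) (m : ℕ) :
    ∏ i ∈ range m, f (m - i) = ∏ k ∈ Icc 1 m, f k :=
  prod_nbij' (m - ·) (m - ·) (by simp; omega) (by simp; omega) (by simp; omega) (by simp; omega)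
    fun _ _ => rfl

theorem prod_Icc_pow_sub {M : Type*} [CommMonoid M] (g : ℕ → M) (m : ℕ) :
    ∏ k ∈ Icc 1 m, g k ^ (m + 1 - k) =
      (∏ k ∈ Icc 1 (m - 1), g k ^ (m - k)) * ∏ k ∈ Icc 1 m, g k := by
  have hpow : ∀ k ∈ Icc 1 m, g k ^ (m + 1 - k) = g k ^ (m - k) * g k := fun k hk => by
    rw [← pow_succ, Nat.sub_add_comm (mem_Icc.1 hk).2]
  rw [prod_congr rfl hpow, prod_mul_distrib]
  congr 1
  refine (prod_subset (Icc_subset_Icc_right (Nat.sub_le m 1)) fun k hk hk' => ?_).symm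
  simp only [mem_Icc] at hk hk'
  rw [show m - k = 0 by omega, pow_zero]

theorem prod_range_natCast_sub_eq_factorial {R : Type*} [CommRing R] (s : ℕ) :
    ∏ l ∈ range s, ((s : R) - l) = s.factorial := by
  rw [← Nat.descFactorial_self, Nat.descFactorial_eq_prod_range, Nat.cast_prod]
  exact prod_congr rfl fun l hl => by rw [Nat.cast_sub (mem_range.1 hl).le]

namespace Matrix

variable {R : Type*} [CommRing R]

section Schur

variable {ι κ : Type*} [Fintype ι] [DecidableEq ι]

/-- The matrix `N` with its `κ`-block of rows and columns cut down to row `a` and column `b`. -/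
def borderSubmatrix (N : Matrix (κ ⊕ ι) (κ ⊕ ι) R) (a b : κ) : Matrix (Unit ⊕ ι) (Unit ⊕ ι) R :=
  N.submatrix (Sum.map (fun _ => a) id) (Sum.map (fun _ => b) id)

theorem det_borderSubmatrix (N : Matrix (κ ⊕ ι) (κ ⊕ ι) R) (hS : IsUnit N.toBlocks₂₂.det)
    (a b : κ) :
    (N.borderSubmatrix a b).det =
      N.toBlocks₂₂.det * (N.toBlocks₁₁ - N.toBlocks₁₂ * N.toBlocks₂₂⁻¹ * N.toBlocks₂₁) a b := by
  let := N.toBlocks₂₂.invertibleOfIsUnitDet hS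
  have h₂₂ : (N.borderSubmatrix a b).toBlocks₂₂ = N.toBlocks₂₂ := rfl
  rw [← fromBlocks_toBlocks (N.borderSubmatrix a b), h₂₂, det_fromBlocks₂₂, det_unique (n := Unit),
    invOf_eq_nonsing_inv]
  simp [borderSubmatrix, toBlocks₁₁, toBlocks₁₂, toBlocks₂₁, toBlocks₂₂, Matrix.mul_apply]

theorem det_mul_det_toBlocks₂₂ (N : Matrix (Fin 2 ⊕ ι) (Fin 2 ⊕ ι) R)
    (hS : IsUnit N.toBlocks₂₂.det) :
    N.det * N.toBlocks₂₂.det = (N.borderSubmatrix 1 1).det * (N.borderSubmatrix 0 0).det -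
      (N.borderSubmatrix 1 0).det * (N.borderSubmatrix 0 1).det := by
  let := N.toBlocks₂₂.invertibleOfIsUnitDet hS
  conv_lhs => rw [← fromBlocks_toBlocks N, det_fromBlocks₂₂, det_fin_two, invOf_eq_nonsing_inv,
    toBlocks_fromBlocks₂₂]
  simp only [det_borderSubmatrix N hS]
  ring

end Schur

theorem det_submatrix_mul_det_submatrix_swap {α n : Type*} [Fintype α] [DecidableEq α]
    [Fintype n] [DecidableEq n] (M M' : Matrix n n R) (e e' : α ≃ n) :
    (M.submatrix e e').det * (M'.submatrix e' e).det = M.det * M'.det := by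
  have h₁ : M.submatrix e e' = (M.submatrix id (e.symm.trans e')).submatrix e e := by
    ext i j; simp
  have h₂ : M'.submatrix e' e = (M'.submatrix id (e.symm.trans e').symm).submatrix e' e' := by
    ext i j; simp
  rw [h₁, h₂, det_submatrix_equiv_self, det_submatrix_equiv_self, det_permute', det_permute',
    Equiv.Perm.sign_symm, mul_mul_mul_comm, ← Int.cast_mul, ← Units.val_mul, Int.units_mul_self,
    Units.val_one, Int.cast_one, one_mul]

end Matrix

noncomputable def Fintype.equivFinOfInjective {α : Type*} [Fintype α] {n : ℕ} (f : α → Fin n)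
    (hf : Function.Injective f) (hcard : Fintype.card α = n) : α ≃ Fin n :=
  Equiv.ofBijective f ((Fintype.bijective_iff_injective_and_card f).2 ⟨hf, by simp [hcard]⟩)

namespace Fin

noncomputable def sumEndsEquiv (m : ℕ) : Fin 2 ⊕ Fin m ≃ Fin (m + 2) :=
  Fintype.equivFinOfInjective (Sum.elim ![0, last (m + 1)] fun k => k.succ.castSucc)
    (by
      refine Function.Injective.sumElim ?_ (fun a b h => by simpa [Fin.ext_iff] using h) ?_
      · intro a b h; fin_cases a <;> fin_cases b <;> simp_all [Fin.ext_iff]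
      · intro a b; fin_cases a <;> simp [Fin.ext_iff]; omega)
    (by simp [add_comm])

noncomputable def sumLastEquiv (m : ℕ) : Unit ⊕ Fin m ≃ Fin (m + 1) :=
  Fintype.equivFinOfInjective (Sum.elim (fun _ => last m) castSucc)
    (by rintro (a|a) (b|b) h <;> simp_all [Fin.ext_iff] <;> omega) (by simp [add_comm])

noncomputable def sumZeroEquiv (m : ℕ) : Unit ⊕ Fin m ≃ Fin (m + 1) :=
  Fintype.equivFinOfInjective (Sum.elim (fun _ => 0) succ)
    (by rintro (a|a) (b|b) h <;> simp_all [Fin.ext_iff]) (by simp [add_comm])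

end Fin

open Fin in
theorem Matrix.desnanot_jacobi {R : Type*} [CommRing R] {m : ℕ}
    (A : Matrix (Fin (m + 2)) (Fin (m + 2)) R)
    (h : IsUnit (A.submatrix (fun k : Fin m => k.succ.castSucc) fun k => k.succ.castSucc).det) :
    A.det * (A.submatrix (fun k : Fin m => k.succ.castSucc) fun k => k.succ.castSucc).det =
      (A.submatrix succ succ).det * (A.submatrix castSucc castSucc).det -
        (A.submatrix succ castSucc).det * (A.submatrix castSucc succ).det := by
  set N := A.submatrix (sumEndsEquiv m) (sumEndsEquiv m)
  have hborder (a b : Fin 2) (r c : Fin (m + 1) → Fin (m + 2))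
      (er ec : Unit ⊕ Fin m ≃ Fin (m + 1))
      (hr : r ∘ er = sumEndsEquiv m ∘ Sum.map (fun _ => a) id)
      (hc : c ∘ ec = sumEndsEquiv m ∘ Sum.map (fun _ => b) id) :
      (A.submatrix r c).submatrix er ec = N.borderSubmatrix a b := by
    ext i j
    simp only [submatrix_apply, borderSubmatrix, N]
    rw [← Function.comp_apply (f := r), hr, ← Function.comp_apply (f := c), hc]
    rfl
  have h₁ : succ ∘ sumLastEquiv m = sumEndsEquiv m ∘ Sum.map (fun _ => 1) id := by
    ext (i|i) <;> simp [sumLastEquiv, sumEndsEquiv, Fintype.equivFinOfInjective]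
  have h₀ : castSucc ∘ sumZeroEquiv m = sumEndsEquiv m ∘ Sum.map (fun _ => 0) id := by
    ext (i|i) <;> simp [sumZeroEquiv, sumEndsEquiv, Fintype.equivFinOfInjective]
  have hN : N.det = A.det := det_submatrix_equiv_self _ _
  have hS : N.toBlocks₂₂ =
      A.submatrix (fun k : Fin m => k.succ.castSucc) fun k => k.succ.castSucc := by
    ext i j; simp [N, toBlocks₂₂, sumEndsEquiv, Fintype.equivFinOfInjective]
  have := det_mul_det_toBlocks₂₂ N (hS ▸ h)
  rwa [hN, hS, ← hborder 1 1 _ _ _ _ h₁ h₁, ← hborder 0 0 _ _ _ _ h₀ h₀,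
    ← hborder 1 0 _ _ _ _ h₁ h₀, ← hborder 0 1 _ _ _ _ h₀ h₁, det_submatrix_equiv_self,
    det_submatrix_equiv_self, det_submatrix_mul_det_submatrix_swap] at this

/-- The subtraction `s + i - j` is truncated: this is the Toeplitz matrix of `a` only when
`n ≤ s + 1`. -/
def Matrix.toeplitz {R : Type*} (a : ℕ → R) (n s : ℕ) : Matrix (Fin n) (Fin n) R :=
  of fun i j => a (s + i - j)

namespace Matrix

variable {R : Type*} (a : ℕ → R) (n s : ℕ)

theorem toeplitz_submatrix_succ_succ :
    (toeplitz a (n + 1) s).submatrix Fin.succ Fin.succ = toeplitz a n s := by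
  ext i j; simp only [toeplitz, submatrix_apply, of_apply, Fin.val_succ]; congr 1; omega

theorem toeplitz_submatrix_castSucc_castSucc :
    (toeplitz a (n + 1) s).submatrix Fin.castSucc Fin.castSucc = toeplitz a n s := by
  ext i j; simp [toeplitz]

theorem toeplitz_submatrix_succ_castSucc :
    (toeplitz a (n + 1) s).submatrix Fin.succ Fin.castSucc = toeplitz a n (s + 1) := by
  ext i j; simp only [toeplitz, submatrix_apply, of_apply, Fin.val_succ, Fin.val_castSucc]
  congr 1; omega

theorem toeplitz_submatrix_castSucc_succ :
    (toeplitz a (n + 1) (s + 1)).submatrix Fin.castSucc Fin.succ = toeplitz a n s := by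
  ext i j; simp only [toeplitz, submatrix_apply, of_apply, Fin.val_succ, Fin.val_castSucc]
  congr 1; omega

theorem toeplitz_submatrix_interior :
    (toeplitz a (n + 2) s).submatrix (fun k : Fin n => k.succ.castSucc)
      (fun k => k.succ.castSucc) = toeplitz a n s := by
  ext i j; simp only [toeplitz, submatrix_apply, of_apply, Fin.val_succ, Fin.val_castSucc]
  congr 1; omega

theorem det_toeplitz_condensation [CommRing R] (t : ℕ) (h : IsUnit (toeplitz a n (t + 1)).det) :
    (toeplitz a (n + 2) (t + 1)).det * (toeplitz a n (t + 1)).det =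
      (toeplitz a (n + 1) (t + 1)).det ^ 2 -
        (toeplitz a (n + 1) (t + 2)).det * (toeplitz a (n + 1) t).det := by
  have := desnanot_jacobi (toeplitz a (n + 2) (t + 1)) (by rwa [toeplitz_submatrix_interior])
  rwa [toeplitz_submatrix_interior, toeplitz_submatrix_succ_succ,
    toeplitz_submatrix_castSucc_castSucc, toeplitz_submatrix_succ_castSucc,
    toeplitz_submatrix_castSucc_succ, ← sq] at this

end Matrix

section ContentProduct

variable {K : Type*}

def contentProd [CommRing K] (x : K) (n s : ℕ) : K :=
  ∏ i ∈ range n, ∏ l ∈ range s, (x + i - l)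

section CommRing

variable [CommRing K] (x : K)

theorem contentProd_succ_left (n s : ℕ) :
    contentProd x (n + 1) s = contentProd x n s * ∏ l ∈ range s, (x + n - l) :=
  prod_range_succ _ _

theorem contentProd_succ_right (n s : ℕ) :
    contentProd x n (s + 1) = contentProd x n s * ∏ i ∈ range n, (x + i - s) := by
  simp only [contentProd, prod_range_succ, prod_mul_distrib]

theorem contentProd_add_one_succ_right (n s : ℕ) :
    contentProd (x + 1) n (s + 1) = contentProd x n s * ∏ i ∈ range n, (x + 1 + i) := by
  simp only [contentProd, prod_range_succ', ← prod_mul_distrib]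
  refine prod_congr rfl fun i _ => ?_
  congr 1
  · exact prod_congr rfl fun l _ => by push_cast; ring
  · push_cast; ring

theorem contentProd_succ_self (m : ℕ) :
    contentProd x (m + 1) (m + 1) =
      contentProd x m m * (x * ∏ k ∈ Icc 1 m, (x ^ 2 - (k : K) ^ 2)) := by
  have hcol : ∏ i ∈ range m, (x + i - m) = ∏ i ∈ range m, (x - ((m - i : ℕ) : K)) :=
    prod_congr rfl fun i hi => by rw [Nat.cast_sub (mem_range.1 hi).le]; ring
  have hrow : ∏ l ∈ range m, (x + m - l) = ∏ l ∈ range m, (x + ((m - l : ℕ) : K)) :=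
    prod_congr rfl fun l hl => by rw [Nat.cast_sub (mem_range.1 hl).le]; ring
  rw [contentProd_succ_left, contentProd_succ_right, prod_range_succ, hcol, hrow,
    prod_range_sub_eq_prod_Icc (fun k => x - (k : K)),
    prod_range_sub_eq_prod_Icc (fun k => x + (k : K)), add_sub_cancel_right]
  have hsq : ∏ k ∈ Icc 1 m, (x ^ 2 - (k : K) ^ 2) =
      (∏ k ∈ Icc 1 m, (x - (k : K))) * ∏ k ∈ Icc 1 m, (x + (k : K)) := by
    rw [← prod_mul_distrib]; exact prod_congr rfl fun k _ => by ring
  rw [hsq]; ring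

theorem contentProd_self (m : ℕ) :
    contentProd x m m = x ^ m * ∏ k ∈ Icc 1 (m - 1), (x ^ 2 - (k : K) ^ 2) ^ (m - k) := by
  induction m with
  | zero => simp [contentProd]
  | succ m ih =>
    rw [contentProd_succ_self, ih, Nat.add_sub_cancel,
      prod_Icc_pow_sub (fun k => x ^ 2 - (k : K) ^ 2)]
    ring

end CommRing

section Field

variable [Field K]

/-- The hook-content formula `∏ (x + c) / ∏ h` for the `n × s` rectangle, whose hook lengths are
the numbers `s + i - l`. -/
def hookContent (x : K) (n s : ℕ) : K :=
  contentProd x n s / contentProd (s : K) n s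

theorem contentProd_ne_zero {x : K} (hx : ∀ z : ℤ, x ≠ z) (n s : ℕ) : contentProd x n s ≠ 0 :=
  prod_ne_zero_iff.2 fun i _ => prod_ne_zero_iff.2 fun l _ h =>
    hx (l - i) (by push_cast; linear_combination h)

theorem hookContent_succ_left (x : K) (n s : ℕ) :
    hookContent x (n + 1) s =
      hookContent x n s * ((∏ l ∈ range s, (x + n - l)) / ∏ l ∈ range s, ((s : K) + n - l)) := by
  rw [hookContent, hookContent, contentProd_succ_left, contentProd_succ_left, mul_div_mul_comm]

theorem hookContent_succ_right (x : K) (n s : ℕ) :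
    hookContent x n (s + 1) =
      hookContent x n s * ((∏ i ∈ range n, (x + i - s)) / ∏ i ∈ range n, ((s : K) + 1 + i)) := by
  rw [hookContent, hookContent, contentProd_succ_right, Nat.cast_succ,
    contentProd_add_one_succ_right, mul_div_mul_comm]

variable [CharZero K]

theorem prod_natCast_add_sub_ne_zero (s n : ℕ) : ∏ l ∈ range s, ((s : K) + n - l) ≠ 0 :=
  prod_ne_zero_iff.2 fun l hl => by
    have hl := mem_range.1 hl
    have : ((s + n - l : ℕ) : K) ≠ 0 := Nat.cast_ne_zero.2 (by omega)
    rwa [Nat.cast_sub (by omega), Nat.cast_add] at this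

theorem prod_natCast_add_one_add_ne_zero (t n : ℕ) : ∏ i ∈ range n, ((t : K) + 1 + i) ≠ 0 :=
  prod_ne_zero_iff.2 fun i _ => by exact_mod_cast (t + i).succ_ne_zero ∘ by omega

theorem hookContent_ne_zero {x : K} (hx : ∀ z : ℤ, x ≠ z) (n s : ℕ) : hookContent x n s ≠ 0 :=
  div_ne_zero (contentProd_ne_zero hx n s)
    (prod_ne_zero_iff.2 fun i _ => prod_natCast_add_sub_ne_zero s i)

theorem hookContent_succ_succ_left (x : K) (n s : ℕ) :
    hookContent x (n + 2) s * hookContent x n s * ((x + n + 1 - s) * (s + n + 1)) =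
      hookContent x (n + 1) s ^ 2 * ((x + n + 1) * (n + 1)) := by
  have hx := prod_range_mul_eq_mul_prod_range (f := fun l : ℕ => x + n + 1 - l)
    (g := fun l : ℕ => x + n - l) (fun l => by push_cast; ring) s
  have hs := prod_range_mul_eq_mul_prod_range (f := fun l : ℕ => (s : K) + n + 1 - l)
    (g := fun l : ℕ => (s : K) + n - l) (fun l => by push_cast; ring) s
  have hs₀ := prod_natCast_add_sub_ne_zero (K := K) s n
  have hs₁ := prod_natCast_add_sub_ne_zero (K := K) s (n + 1)
  simp only [Nat.cast_zero, sub_zero] at hx hs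
  rw [hookContent_succ_left x (n + 1), hookContent_succ_left x n]
  push_cast at hs₁ ⊢
  simp only [← add_assoc] at hs₁ ⊢
  field_simp
  linear_combination hookContent x n s ^ 2 * (∏ l ∈ range s, (x + n - l)) *
      ((∏ l ∈ range s, ((s : K) + n - l)) * (s + n + 1)) * hx -
    hookContent x n s ^ 2 * (∏ l ∈ range s, (x + n - l)) ^ 2 * (x + n + 1) * hs

theorem hookContent_succ_succ_right (x : K) (n s : ℕ) :
    hookContent x n (s + 2) * hookContent x n s * ((x + n - s - 1) * (s + n + 1)) =
      hookContent x n (s + 1) ^ 2 * ((x - s - 1) * (s + 1)) := by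
  have hx := prod_range_mul_eq_mul_prod_range (f := fun i : ℕ => x + i - (s + 1))
    (g := fun i : ℕ => x + i - s) (fun i => by push_cast; ring) n
  have hs := prod_range_mul_eq_mul_prod_range (f := fun i : ℕ => (s : K) + 1 + i)
    (g := fun i : ℕ => (s : K) + 1 + 1 + i) (fun i => by push_cast; ring) n
  have hs₀ := prod_natCast_add_one_add_ne_zero (K := K) s n
  have hs₁ := prod_natCast_add_one_add_ne_zero (K := K) (s + 1) n
  simp only [Nat.cast_zero, add_zero] at hx hs
  rw [hookContent_succ_right x n (s + 1), hookContent_succ_right x n s]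
  push_cast at hs₁ ⊢
  field_simp
  linear_combination hookContent x n s ^ 2 * (∏ i ∈ range n, (x + i - s)) *
      (∏ i ∈ range n, ((s : K) + 1 + i)) * (s + n + 1) * hx +
    hookContent x n s ^ 2 * (∏ i ∈ range n, (x + i - s)) ^ 2 * (x - s - 1) * hs

theorem hookContent_condensation (x : K) (m t : ℕ) (h : x + m - t ≠ 0) :
    hookContent x (m + 2) (t + 1) * hookContent x m (t + 1) =
      hookContent x (m + 1) (t + 1) ^ 2 -
        hookContent x (m + 1) (t + 2) * hookContent x (m + 1) t := by
  have hrow := hookContent_succ_succ_left x m (t + 1)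
  have hcol := hookContent_succ_succ_right x (m + 1) t
  have hne : (t : K) + m + 2 ≠ 0 := by exact_mod_cast (t + m + 1).succ_ne_zero
  push_cast at hrow hcol
  refine mul_right_cancel₀ (mul_ne_zero h hne) ?_
  linear_combination hrow + hcol

end Field

theorem hookContent_one (x : ℝ) (s : ℕ) : hookContent x 1 s = gchoose x s := by
  simp only [hookContent, gchoose, contentProd, prod_range_one, Nat.cast_zero, add_zero,
    prod_range_natCast_sub_eq_factorial]

end ContentProduct

theorem det_toeplitz_gchoose {θ : ℝ} (hθ : ∀ z : ℤ, θ ≠ z) {n s : ℕ} (h : n ≤ s + 1) :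
    (toeplitz (gchoose θ) n s).det = hookContent θ n s := by
  induction n using Nat.twoStepInduction generalizing s with
  | zero => simp [hookContent, contentProd]
  | one => simp [toeplitz, hookContent_one]
  | more m ih₀ ih₁ =>
    obtain ⟨t, rfl⟩ : ∃ t, s = t + 1 := ⟨s - 1, by omega⟩
    have hm := hookContent_ne_zero hθ m (t + 1)
    refine mul_right_cancel₀ hm ?_
    calc (toeplitz (gchoose θ) (m + 2) (t + 1)).det * hookContent θ m (t + 1)
        = (toeplitz (gchoose θ) (m + 1) (t + 1)).det ^ 2 -
            (toeplitz (gchoose θ) (m + 1) (t + 2)).det * (toeplitz (gchoose θ) (m + 1) t).det := by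
          rw [← ih₀ (by omega)]
          exact det_toeplitz_condensation _ m t (by rw [ih₀ (by omega)]; exact hm.isUnit)
      _ = hookContent θ (m + 1) (t + 1) ^ 2 -
            hookContent θ (m + 1) (t + 2) * hookContent θ (m + 1) t := by
          rw [ih₁ (by omega), ih₁ (by omega), ih₁ (by omega)]
      _ = hookContent θ (m + 2) (t + 1) * hookContent θ m (t + 1) :=
          (hookContent_condensation θ m t (fun h0 => hθ (t - m) (by push_cast; linarith))).symm

theorem stmt_16_general (m : ℕ) (θ : ℝ) (hθ0 : 0 < θ) (hθ1 : θ < 1)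
    (K : Matrix (Fin m) (Fin m) ℝ)
    (hK : ∀ i j : Fin m, K i j = gchoose θ (m + (i : ℕ) - (j : ℕ))) :
    K.det = (θ ^ m * ∏ k ∈ Finset.Icc 1 (m - 1), (θ ^ 2 - (k:ℝ) ^ 2) ^ (m - k)) /
        ((m : ℝ) ^ m * ∏ k ∈ Finset.Icc 1 (m - 1), ((m : ℝ) ^ 2 - (k:ℝ) ^ 2) ^ (m - k)) ∧
      K.det ≠ 0 := by
  have hθ : ∀ z : ℤ, θ ≠ z := fun z hz => by
    have h0 : (0 : ℤ) < z := by exact_mod_cast hz ▸ hθ0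
    have h1 : z < 1 := by exact_mod_cast hz ▸ hθ1
    omega
  have hdet : K.det = hookContent θ m m := by
    rw [show K = toeplitz (gchoose θ) m m from Matrix.ext hK, det_toeplitz_gchoose hθ (by omega)]
  rw [hdet]
  exact ⟨by rw [hookContent, contentProd_self, contentProd_self], hookContent_ne_zero hθ m m⟩

theorem stmt_16 (m : ℕ) (hm : 1 ≤ m) (θ : ℝ) (hθ0 : 0 < θ) (hθ1 : θ < 1)
    (K : Matrix (Fin m) (Fin m) ℝ)
    (hK : ∀ i j : Fin m, K i j = gchoose θ (m + (i : ℕ) - (j : ℕ))) :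
    K.det = (θ ^ m * ∏ k ∈ Finset.Icc 1 (m - 1), (θ ^ 2 - (k:ℝ) ^ 2) ^ (m - k)) /
        ((m : ℝ) ^ m * ∏ k ∈ Finset.Icc 1 (m - 1), ((m : ℝ) ^ 2 - (k:ℝ) ^ 2) ^ (m - k)) ∧
      K.det ≠ 0 :=
  stmt_16_general m θ hθ0 hθ1 K hK
end

section
/- For m ≥ 1 and θ ∈ (0,1), the determinant of the m×m matrix K with entries K_{ij} = C(θ, m+1+i-j) (the case n = 2m+1) equals θ^m (θ-1)^m (θ+1)^{m-1} (θ-2)^{m-1} ··· (θ+m-1)(θ-m) divided by (m+1)^m m^m (m+2)^{m-1} (m-1)^{m-1} ··· 1·(2m), and in particular is nonzero for θ ∈ (0,1). -/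
/-!
Write `T(c, r)` for the `r × r` Toeplitz matrix `(C(θ, c + i - j))`. Deleting the first or last
row together with the first or last column of `T(c, r + 2)` gives `T(c, r + 1)`, `T(c + 1, r + 1)`
or `T(c - 1, r + 1)`, and deleting both gives `T(c, r)`, so the Desnanot–Jacobi identity is a
three-term recurrence for these determinants. The product
`∏_{i < r, j < c} (θ + i - j) / (1 + i + j)` satisfies the same recurrence (after telescoping, a
single quadratic identity) and the same initial values `r = 0, 1`; it never vanishes for
non-integral `θ`, so induction on `r` identifies it with `det T(c, r)`. For `c = m + 1`, `r = m`,
collecting the factors according to `i + j` gives the stated product.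
-/

open Finset

namespace Matrix

variable {n R : Type*} [Fintype n] [DecidableEq n] [CommRing R]

theorem det_one_updateCol_updateCol {p q : n} (hpq : p ≠ q) (u w : n → R) :
    (((1 : Matrix n n R).updateCol p u).updateCol q w).det = u p * w q - w p * u q := by
  let e₁ : n → R := Pi.single p 1
  let e₂ : n → R := Pi.single q 1
  let U : Matrix n (Fin 2) R := of fun i => ![u i - e₁ i, w i - e₂ i]
  let V : Matrix (Fin 2) n R := of ![e₁, e₂]
  have hP : ((1 : Matrix n n R).updateCol p u).updateCol q w = 1 + U * V := by
    ext i j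
    by_cases hjq : j = q
    · subst hjq; simp [U, V, e₁, e₂, mul_apply, one_apply, Pi.single_apply, hpq]
    by_cases hjp : j = p
    · subst hjp; simp [U, V, e₁, e₂, mul_apply, one_apply, Pi.single_apply, hjq]
    · simp [U, V, e₁, e₂, mul_apply, one_apply, Pi.single_apply, hjp, hjq]
  rw [hP, det_one_add_mul_comm, det_fin_two]
  simp [U, V, e₁, e₂, Pi.single_apply, hpq, hpq.symm]

theorem det_mul_det_mul_det_updateCol_single {p q : n} (hpq : p ≠ q) (A : Matrix n n R) :
    A.det * (A.det * ((A.updateCol p (Pi.single p 1)).updateCol q (Pi.single q 1)).det) =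
      A.det * (A.adjugate p p * A.adjugate q q - A.adjugate p q * A.adjugate q p) := by
  have hcol : ∀ k, A *ᵥ (fun i => A.adjugate i k) = A.det • Pi.single k 1 := by
    intro k
    ext i
    have := congrFun₂ A.mul_adjugate i k
    simp only [mul_apply, smul_apply, one_apply] at this
    simp [mulVec, dotProduct, this, Pi.single_apply]
  have hAP : A * ((1 : Matrix n n R).updateCol p (fun i => A.adjugate i p)).updateCol q
      (fun i => A.adjugate i q) =
      (A.updateCol p (A.det • Pi.single p 1)).updateCol q (A.det • Pi.single q 1) := by
    rw [mul_updateCol, mul_updateCol, Matrix.mul_one, hcol, hcol]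
  have := congrArg det hAP
  rw [det_mul, det_one_updateCol_updateCol hpq, det_updateCol_smul, updateCol_comm _ hpq,
    det_updateCol_smul, updateCol_comm _ hpq.symm] at this
  rw [← this]

theorem det_mul_det_updateCol_single_updateCol_single {p q : n} (hpq : p ≠ q) (A : Matrix n n R) :
    A.det * ((A.updateCol p (Pi.single p 1)).updateCol q (Pi.single q 1)).det =
      A.adjugate p p * A.adjugate q q - A.adjugate p q * A.adjugate q p := by
  let X := mvPolynomialX n n ℤ
  have hX := mul_left_cancel₀ (det_mvPolynomialX_ne_zero n ℤ)
    (det_mul_det_mul_det_updateCol_single hpq X)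
  set f := MvPolynomial.aeval (R := ℤ) fun ij : n × n => A ij.1 ij.2
  have hs : ∀ k : n, f ∘ Pi.single k 1 = Pi.single k 1 := fun k => by
    ext j; simp [Pi.single_apply, apply_ite f]
  have hadj : ∀ i j, (X.map f).adjugate i j = f (X.adjugate i j) := fun i j => by
    rw [← AlgHom.mapMatrix_apply, ← AlgHom.map_adjugate]; rfl
  have := congrArg f hX
  rw [show A = X.map f from (mvPolynomialX_mapMatrix_aeval ℤ A).symm]
  simpa [AlgHom.map_det, hadj, map_updateCol, hs] using this

theorem det_updateCol_single_self {k : ℕ} (M : Matrix (Fin (k + 1)) (Fin (k + 1)) R)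
    (i : Fin (k + 1)) :
    (M.updateCol i (Pi.single i 1)).det = (M.submatrix i.succAbove i.succAbove).det := by
  rw [← det_transpose, ← updateRow_transpose, ← adjugate_apply,
    adjugate_fin_succ_eq_det_submatrix, ← two_mul, pow_mul, neg_one_sq, one_pow, one_mul,
    ← transpose_submatrix, det_transpose]

theorem desnanot_jacobi_s17 {k : ℕ} (A : Matrix (Fin (k + 2)) (Fin (k + 2)) R) :
    A.det * (A.submatrix (Fin.castSucc ∘ Fin.succ) (Fin.castSucc ∘ Fin.succ)).det =
      (A.submatrix Fin.succ Fin.succ).det * (A.submatrix Fin.castSucc Fin.castSucc).det -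
        (A.submatrix Fin.succ Fin.castSucc).det * (A.submatrix Fin.castSucc Fin.succ).det := by
  have hcorner : (A.updateCol 0 (Pi.single 0 1)).submatrix Fin.castSucc Fin.castSucc =
      (A.submatrix Fin.castSucc Fin.castSucc).updateCol 0 (Pi.single 0 1) := by
    ext i j
    simp [updateCol_apply, Pi.single_apply]
  have h := det_mul_det_updateCol_single_updateCol_single (Fin.last_pos (n := k)).ne A
  rw [det_updateCol_single_self, Fin.succAbove_last, hcorner, det_updateCol_single_self,
    Fin.succAbove_zero, submatrix_submatrix] at h
  rw [h]
  have hsign : ((-1 : R) ^ (k + 1)) * (-1) ^ (k + 1) = 1 := by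
    rw [← pow_add, Even.neg_one_pow ⟨k + 1, rfl⟩]
  simp only [adjugate_fin_succ_eq_det_submatrix, Fin.succAbove_zero, Fin.succAbove_last,
    Fin.val_zero, Fin.val_last, add_zero, zero_add, pow_zero, one_mul,
    Even.neg_one_pow (⟨k + 1, rfl⟩ : Even (k + 1 + (k + 1)))]
  linear_combination (-(A.submatrix Fin.castSucc Fin.succ).det *
    (A.submatrix Fin.succ Fin.castSucc).det) * hsign

end Matrix

theorem prod_range_mul_prod_range_succ_add {M : Type*} [CommMonoid M] (g : ℕ → M) (m : ℕ) :
    ∏ i ∈ range m, ∏ j ∈ range (m + 1), g (i + j) =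
      ∏ k ∈ range m, (g (m + k) * g (m - 1 - k)) ^ (m - k) := by
  have hrow : ∀ i ∈ range m, ∏ j ∈ range (m + 1), g (i + j) =
      (∏ k ∈ range (m - i), g (m - 1 - k)) * ∏ k ∈ range (i + 1), g (m + k) := by
    intro i hi
    rw [mem_range] at hi
    rw [show m + 1 = m - i + (i + 1) by omega, prod_range_add, ← prod_range_reflect]
    congr 1 <;> refine prod_congr rfl fun k hk => ?_ <;> rw [mem_range] at hk <;> congr 1 <;> omega
  have hlow : ∏ i ∈ range m, ∏ k ∈ range (m - i), g (m - 1 - k) =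
      ∏ k ∈ range m, ∏ _i ∈ range (m - k), g (m - 1 - k) :=
    prod_comm' fun i k => by simp only [mem_range]; omega
  have hhigh : ∏ i ∈ range m, ∏ k ∈ range (i + 1), g (m + k) =
      ∏ k ∈ range m, ∏ _i ∈ Ico k m, g (m + k) :=
    prod_comm' fun i k => by simp only [mem_range, mem_Ico]; omega
  rw [prod_congr rfl hrow, prod_mul_distrib, hlow, hhigh, ← prod_mul_distrib]
  refine prod_congr rfl fun k _ => ?_
  rw [prod_const, prod_const, card_range, Nat.card_Ico, mul_pow, mul_comm]

/-- `c + i - j` is natural subtraction; no entry is truncated when `r ≤ c + 1`. -/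
noncomputable def binomToeplitz (θ : ℝ) (c r : ℕ) : Matrix (Fin r) (Fin r) ℝ :=
  Matrix.of fun i j => gchoose θ (c + i - j)

noncomputable def binomToeplitzProd (θ : ℝ) (c r : ℕ) : ℝ :=
  ∏ i ∈ range r, ∏ j ∈ range c, (θ + i - j) / (1 + i + j)

noncomputable def binomToeplitzRow (θ : ℝ) (c r : ℕ) : ℝ :=
  ∏ j ∈ range c, (θ + r - j) / (1 + r + j)

noncomputable def binomToeplitzCol (θ : ℝ) (c r : ℕ) : ℝ :=
  ∏ i ∈ range r, (θ + i - c) / (1 + i + c)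

section

variable (θ : ℝ)

theorem binomToeplitzProd_succ_right (c r : ℕ) :
    binomToeplitzProd θ c (r + 1) = binomToeplitzProd θ c r * binomToeplitzRow θ c r :=
  prod_range_succ _ _

theorem binomToeplitzProd_succ_left (c r : ℕ) :
    binomToeplitzProd θ (c + 1) r = binomToeplitzProd θ c r * binomToeplitzCol θ c r := by
  simp only [binomToeplitzProd, binomToeplitzCol, prod_range_succ, prod_mul_distrib]

theorem binomToeplitzRow_succ_mul (c r : ℕ) :
    binomToeplitzRow θ c (r + 1) * ((θ + r + 1 - c) * (r + 1 + c)) =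
      binomToeplitzRow θ c r * ((θ + r + 1) * (r + 1)) := by
  induction c with
  | zero => simp [binomToeplitzRow]
  | succ c ih =>
    simp only [binomToeplitzRow, prod_range_succ] at ih ⊢
    generalize ∏ j ∈ range c, (θ + ↑(r + 1) - j) / (1 + ↑(r + 1) + j) = P₁ at ih ⊢
    generalize ∏ j ∈ range c, (θ + r - j) / (1 + r + j) = P₀ at ih ⊢
    push_cast at ih ⊢
    field_simp
    linear_combination ((r : ℝ) + c + 2) * (θ + r - c) * ih

theorem binomToeplitzCol_succ_mul (c r : ℕ) :
    binomToeplitzCol θ (c + 1) r * ((θ + r - (c + 1)) * (c + 1 + r)) =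
      binomToeplitzCol θ c r * ((θ - (c + 1)) * (c + 1)) := by
  induction r with
  | zero => simp [binomToeplitzCol]
  | succ r ih =>
    simp only [binomToeplitzCol, prod_range_succ] at ih ⊢
    generalize ∏ i ∈ range r, (θ + i - ↑(c + 1)) / (1 + i + ↑(c + 1)) = P₁ at ih ⊢
    generalize ∏ i ∈ range r, (θ + i - c) / (1 + i + c) = P₀ at ih ⊢
    push_cast at ih ⊢
    field_simp
    linear_combination ((c : ℝ) + r + 2) * (θ + r - c) * ih

theorem binomToeplitzProd_one (c : ℕ) : binomToeplitzProd θ c 1 = gchoose θ c := by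
  rw [binomToeplitzProd, prod_range_one, prod_div_distrib, gchoose,
    ← prod_range_add_one_eq_factorial]
  push_cast
  simp only [add_comm (1 : ℝ), add_zero, zero_add]

variable {θ}

theorem binomToeplitzProd_ne_zero (hθ : ∀ n : ℤ, θ ≠ n) (c r : ℕ) :
    binomToeplitzProd θ c r ≠ 0 := by
  simp only [binomToeplitzProd, prod_ne_zero_iff]
  intro i _ j _
  refine div_ne_zero (fun h => hθ (j - i) ?_) (by positivity)
  push_cast
  linarith

theorem binomToeplitzProd_condensation (hθ : ∀ n : ℤ, θ ≠ n) (d r : ℕ) :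
    binomToeplitzProd θ (d + 1) (r + 2) * binomToeplitzProd θ (d + 1) r =
      binomToeplitzProd θ (d + 1) (r + 1) * binomToeplitzProd θ (d + 1) (r + 1) -
        binomToeplitzProd θ (d + 2) (r + 1) * binomToeplitzProd θ d (r + 1) := by
  have hF := binomToeplitzProd_succ_right θ (d + 1) r
  have hV := binomToeplitzProd_succ_left θ d (r + 1)
  have hrow := binomToeplitzRow_succ_mul θ (d + 1) r
  have hcol := binomToeplitzCol_succ_mul θ d (r + 1)
  rw [binomToeplitzProd_succ_right θ (d + 1) (r + 1),
    binomToeplitzProd_succ_left θ (d + 1) (r + 1)]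
  set F := binomToeplitzProd θ (d + 1) (r + 1)
  push_cast at *
  have hZ : (θ + r - d) * (r + d + 2) ≠ 0 :=
    mul_ne_zero (fun h => hθ (d - r) (by push_cast; linarith)) (by positivity)
  apply mul_right_cancel₀ hZ
  linear_combination (F * binomToeplitzProd θ (d + 1) r) * hrow +
    (F * binomToeplitzProd θ d (r + 1)) * hcol - (F * ((θ + r + 1) * (r + 1))) * hF -
    (F * ((θ - (d + 1)) * (d + 1))) * hV

theorem binomToeplitz_submatrix {c c' r s a b : ℕ} (f g : Fin s → Fin r)
    (hf : ∀ i, (f i : ℕ) = i + a) (hg : ∀ j, (g j : ℕ) = j + b) (hc : c' + b = c + a) :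
    (binomToeplitz θ c r).submatrix f g = binomToeplitz θ c' s := by
  ext i j
  simp only [binomToeplitz, Matrix.submatrix_apply, Matrix.of_apply, hf, hg]
  congr 1
  omega

theorem det_binomToeplitz (hθ : ∀ n : ℤ, θ ≠ n) {c r : ℕ} (hr : r ≤ c + 1) :
    (binomToeplitz θ c r).det = binomToeplitzProd θ c r := by
  induction r using Nat.twoStepInduction generalizing c with
  | zero => simp [binomToeplitzProd]
  | one => simp [binomToeplitz, binomToeplitzProd_one]
  | more r ih₀ ih₁ =>
    obtain ⟨d, rfl⟩ : ∃ d, c = d + 1 := ⟨c - 1, by omega⟩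
    have h := Matrix.desnanot_jacobi_s17 (binomToeplitz θ (d + 1) (r + 2))
    rw [binomToeplitz_submatrix (c' := d + 1) (a := 1) (b := 1) (Fin.castSucc ∘ Fin.succ)
        (Fin.castSucc ∘ Fin.succ) (fun _ => rfl) (fun _ => rfl) rfl,
      binomToeplitz_submatrix (c' := d + 1) (a := 1) (b := 1) Fin.succ Fin.succ
        Fin.val_succ Fin.val_succ rfl,
      binomToeplitz_submatrix (c' := d + 1) (a := 0) (b := 0) Fin.castSucc Fin.castSucc
        (fun _ => rfl) (fun _ => rfl) rfl,
      binomToeplitz_submatrix (c' := d + 2) (a := 1) (b := 0) Fin.succ Fin.castSucc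
        Fin.val_succ (fun _ => rfl) rfl,
      binomToeplitz_submatrix (c' := d) (a := 0) (b := 1) Fin.castSucc Fin.succ
        (fun _ => rfl) Fin.val_succ rfl,
      ih₀ (by omega), ih₁ (c := d + 1) (by omega), ih₁ (c := d + 2) (by omega),
      ih₁ (c := d) (by omega)] at h
    exact mul_right_cancel₀ (binomToeplitzProd_ne_zero hθ _ _)
      (h.trans (binomToeplitzProd_condensation hθ d r).symm)

end

theorem binomToeplitzProd_succ_self (θ : ℝ) (m : ℕ) :
    binomToeplitzProd θ (m + 1) m =
      (∏ k ∈ range m, ((θ + k) * (θ - 1 - k)) ^ (m - k)) /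
        ∏ k ∈ range m, (((m : ℝ) + 1 + k) * ((m : ℝ) - k)) ^ (m - k) := by
  simp only [binomToeplitzProd, prod_div_distrib]
  congr 1
  · have hrefl : ∀ i : ℕ,
        ∏ j ∈ range (m + 1), (θ + i - j) = ∏ j ∈ range (m + 1), (θ + ↑(i + j) - m) := by
      intro i
      rw [← prod_range_reflect]
      refine prod_congr rfl fun j hj => ?_
      rw [mem_range] at hj
      rw [Nat.add_sub_cancel, Nat.cast_sub (by omega)]
      push_cast
      ring
    rw [prod_congr rfl fun i _ => hrefl i, prod_range_mul_prod_range_succ_add (fun s => θ + s - m)]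
    refine prod_congr rfl fun k hk => ?_
    rw [mem_range] at hk
    rw [Nat.cast_sub (by omega), Nat.cast_sub (by omega)]
    push_cast
    ring
  · have hsum : ∀ i : ℕ, ∏ j ∈ range (m + 1), ((1 : ℝ) + i + j) =
        ∏ j ∈ range (m + 1), (1 + ((i + j : ℕ) : ℝ)) :=
      fun i => prod_congr rfl fun j _ => by push_cast; ring
    rw [prod_congr rfl fun i _ => hsum i,
      prod_range_mul_prod_range_succ_add (fun s => (1 : ℝ) + s)]
    refine prod_congr rfl fun k hk => ?_
    rw [mem_range] at hk
    rw [Nat.cast_sub (by omega), Nat.cast_sub (by omega)]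
    push_cast
    ring

theorem stmt_17_general (m : ℕ) (θ : ℝ) (hθ0 : 0 < θ) (hθ1 : θ < 1)
    (K : Matrix (Fin m) (Fin m) ℝ)
    (hK : ∀ i j : Fin m, K i j = gchoose θ (m + 1 + (i : ℕ) - (j : ℕ))) :
    K.det = (∏ k ∈ Finset.range m, ((θ + k) * (θ - 1 - k)) ^ (m - k)) /
        (∏ k ∈ Finset.range m, (((m : ℝ) + 1 + k) * ((m : ℝ) - k)) ^ (m - k)) ∧
      K.det ≠ 0 := by
  have hθ : ∀ n : ℤ, θ ≠ n := by
    rintro n rfl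
    have h0 : (0 : ℤ) < n := by exact_mod_cast hθ0
    have h1 : n < 1 := by exact_mod_cast hθ1
    omega
  have hdet : K.det = binomToeplitzProd θ (m + 1) m := by
    rw [show K = binomToeplitz θ (m + 1) m from Matrix.ext hK]
    exact det_binomToeplitz hθ (by omega)
  rw [hdet, ← binomToeplitzProd_succ_self]
  exact ⟨rfl, binomToeplitzProd_ne_zero hθ _ _⟩

theorem stmt_17 (m : ℕ) (hm : 1 ≤ m) (θ : ℝ) (hθ0 : 0 < θ) (hθ1 : θ < 1)
    (K : Matrix (Fin m) (Fin m) ℝ)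
    (hK : ∀ i j : Fin m, K i j = gchoose θ (m + 1 + (i : ℕ) - (j : ℕ))) :
    K.det = (∏ k ∈ Finset.range m, ((θ + k) * (θ - 1 - k)) ^ (m - k)) /
        (∏ k ∈ Finset.range m, (((m : ℝ) + 1 + k) * ((m : ℝ) - k)) ^ (m - k)) ∧
      K.det ≠ 0 :=
  stmt_17_general m θ hθ0 hθ1 K hK
end

section
/- Let m ∈ ℕ and let A_m be the m×m matrix with entries (A_m)_{ab} = C(m+1, 2a-b) (binomial coefficient, zero when 2a-b < 0 or > m+1). Then det A_m = 2^{m(m+1)/2}. -/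
/-
Index rows and columns from `0`. Reading column `b` as `X^b`, the matrix `A` sends a polynomial
`u` of degree `< m` to the odd-index coefficients `(f u)_{2a+1}` of `f u`, `f = (1 + X)^(m+1)`,
i.e. to `oddPart (f u)`. Multiply `A` on the right by the unitriangular matrix whose columns are
`u_k = X^k (1 - X)^(m-1-k)`. Since `(1 - X)^n (1 + X)^n = (1 - X²)^n` is even,
`oddPart (f u_k) = (1 - Y)^(m-1-k) · oddPart (X^k (1 + X)^(k+2))`. After the substitution
`Y ↦ 1 - Y`, and listing coefficients from the top, the matrix becomes upper triangular with
diagonal entries `oddPart (X^k (1 + X)^(k+2)) (1) = (2^(k+2) - 0) / 2 = 2^(k+1)`; the substitution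
matrix with reversed rows has determinant `1`. Hence `det A = ∏_{k<m} 2^(k+1) = 2^(m(m+1)/2)`.
-/

open Matrix Finset

theorem Finset.sum_range_two_mul_sub_mul_neg_one_pow {R : Type*} [CommRing R] (g : ℕ → R)
    (N : ℕ) :
    ∑ i ∈ range (2 * N), (g i - g i * (-1) ^ i) = 2 * ∑ i ∈ range N, g (2 * i + 1) := by
  induction N with
  | zero => simp
  | succ N ih =>
    rw [mul_add_one, sum_range_succ, sum_range_succ, sum_range_succ, ih, pow_succ, pow_mul]
    simp only [neg_one_sq, one_pow]
    ring

theorem Fin.prod_pow_val_add_one {M : Type*} [CommMonoid M] (a : M) (m : ℕ) :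
    ∏ k : Fin m, a ^ ((k : ℕ) + 1) = a ^ (m * (m + 1) / 2) := by
  rw [Fin.prod_univ_eq_prod_range (fun k => a ^ (k + 1)), prod_pow_eq_pow_sum]
  have h := sum_range_id_mul_two (m + 1)
  rw [sum_range_succ', add_zero, add_tsub_cancel_right] at h
  rw [mul_comm m, ← h, Nat.mul_div_cancel _ two_pos]

namespace Polynomial

variable {R : Type*} [CommRing R]

noncomputable def oddPart (f : R[X]) : R[X] := contract 2 f.divX

theorem coeff_oddPart (f : R[X]) (n : ℕ) : (oddPart f).coeff n = f.coeff (2 * n + 1) := by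
  rw [oddPart, coeff_contract two_ne_zero, coeff_divX, mul_comm]

theorem oddPart_mul_expand (f g : R[X]) : oddPart (f * expand R 2 g) = oddPart f * g := by
  have hX : ∀ q : R[X], (q * X).divX = q := fun q => by ext; simp [coeff_divX]
  have hC : contract 2 (C (f.coeff 0) * expand R 2 g).divX = 0 := by
    ext n
    rw [coeff_contract two_ne_zero, coeff_divX, coeff_C_mul, coeff_expand two_pos,
      if_neg (by omega), mul_zero, coeff_zero]
  conv_lhs => rw [← divX_mul_X_add f, add_mul, mul_right_comm, oddPart, divX_add, hX,
    contract_add two_ne_zero, hC, add_zero, contract_mul_expand two_ne_zero]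
  rfl

theorem natDegree_oddPart_le (f : R[X]) : (oddPart f).natDegree ≤ (f.natDegree - 1) / 2 := by
  refine natDegree_le_iff_coeff_eq_zero.mpr fun n hn => ?_
  rw [coeff_oddPart]
  exact coeff_eq_zero_of_natDegree_lt (by omega)

theorem two_mul_eval_one_oddPart (f : R[X]) :
    2 * (oddPart f).eval 1 = f.eval 1 - f.eval (-1) := by
  set N := f.natDegree + 1
  rw [eval_eq_sum_range' (n := N) (by have := natDegree_oddPart_le f; omega),
    eval_eq_sum_range' (n := 2 * N) (by omega), eval_eq_sum_range' (n := 2 * N) (by omega),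
    ← sum_sub_distrib]
  simp only [one_pow, mul_one, coeff_oddPart]
  exact (sum_range_two_mul_sub_mul_neg_one_pow _ N).symm

variable {m : ℕ}

def coeffMatrix (p : Fin m → R[X]) : Matrix (Fin m) (Fin m) R := of fun i k => (p k).coeff i

theorem coeffMatrix_pow_mul_coeffMatrix (g : R[X]) (p : Fin m → R[X])
    (hp : ∀ k, (p k).natDegree < m) :
    coeffMatrix (fun j : Fin m => g ^ (j : ℕ)) * coeffMatrix p =
      coeffMatrix fun k => (p k).comp g := by
  ext i k
  simp only [coeffMatrix, mul_apply, of_apply]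
  rw [comp_eq_sum_left, sum_over_range' _ (by simp) m (hp k), finsetSum_coeff,
    ← Fin.sum_univ_eq_sum_range]
  simp [mul_comm]

theorem natDegree_one_sub_X_le : (1 - X : R[X]).natDegree ≤ 1 := by compute_degree

theorem coeff_one_sub_X_pow_of_lt {j n : ℕ} (h : j < n) : ((1 - X : R[X]) ^ j).coeff n = 0 :=
  coeff_eq_zero_of_natDegree_lt <|
    (natDegree_pow_le_of_le j natDegree_one_sub_X_le).trans_lt (by omega)

theorem coeff_one_sub_X_pow_self (n : ℕ) : ((1 - X : R[X]) ^ n).coeff n = (-1) ^ n := by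
  simpa [coeff_X, coeff_one] using
    coeff_pow_of_natDegree_le (m := n) (natDegree_one_sub_X_le (R := R))

theorem det_submatrix_rev_coeffMatrix_one_sub_X_pow :
    ((coeffMatrix fun j : Fin m => (1 - X : R[X]) ^ (j : ℕ)).submatrix Fin.rev id).det = 1 := by
  induction m with
  | zero => simp
  | succ n ih =>
    have hminor : ((coeffMatrix fun j : Fin (n + 1) => (1 - X : R[X]) ^ (j : ℕ)).submatrix
        Fin.rev id).submatrix Fin.succ (Fin.last n).succAbove =
        (coeffMatrix fun j : Fin n => (1 - X : R[X]) ^ (j : ℕ)).submatrix Fin.rev id := by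
      ext i j
      simp [coeffMatrix]
    -- In the first row only the last entry `(-1)ⁿ` survives; its cofactor sign is `(-1)ⁿ`.
    rw [det_succ_row_zero, Fin.sum_univ_succAbove _ (Fin.last n), hminor, ih]
    simp [coeffMatrix, coeff_one_sub_X_pow_self, coeff_one_sub_X_pow_of_lt, ← mul_pow]

theorem det_coeffMatrix_of_comp_one_sub_X (p r : Fin m → R[X])
    (hp : ∀ k, (p k).natDegree < m) (hr : ∀ k, (p k).comp (1 - X) = X ^ (m - 1 - k) * r k) :
    (coeffMatrix p).det = ∏ k, (r k).coeff 0 := by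
  set T := (coeffMatrix fun j : Fin m => (1 - X : R[X]) ^ (j : ℕ)).submatrix Fin.rev id
  have hTp : T * coeffMatrix p =
      (coeffMatrix fun k => X ^ (m - 1 - k) * r k).submatrix Fin.rev id := by
    simp_rw [← hr, ← coeffMatrix_pow_mul_coeffMatrix _ _ hp]
    rfl
  have htri : (T * coeffMatrix p).IsUpperTriangular := by
    intro i k hki
    rw [hTp, submatrix_apply, coeffMatrix, of_apply, coeff_X_pow_mul', if_neg]
    simp only [id, Fin.val_rev] at hki ⊢
    omega
  rw [← one_mul (coeffMatrix p).det, ← det_submatrix_rev_coeffMatrix_one_sub_X_pow, ← det_mul,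
    det_of_isUpperTriangular htri, hTp]
  refine prod_congr rfl fun k _ => ?_
  have hk : (k.rev : ℕ) = m - 1 - k := by rw [Fin.val_rev]; omega
  rw [submatrix_apply, coeffMatrix, of_apply, coeff_X_pow_mul', id, hk, if_pos le_rfl,
    Nat.sub_self]

theorem mul_coeffMatrix_eq_coeffMatrix_oddPart (f : R[X]) (u : Fin m → R[X])
    (hu : ∀ k, (u k).natDegree < m) :
    (of fun a b : Fin m => if (b : ℕ) ≤ 2 * a + 1 then f.coeff (2 * a + 1 - b) else 0) *
      coeffMatrix u = coeffMatrix fun k => oddPart (f * u k) := by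
  ext a k
  simp only [coeffMatrix, mul_apply, of_apply, coeff_oddPart]
  conv_rhs => rw [as_sum_range_C_mul_X_pow' _ (hu k), mul_sum, finsetSum_coeff,
    ← Fin.sum_univ_eq_sum_range]
  refine sum_congr rfl fun j _ => ?_
  rw [mul_left_comm, coeff_C_mul, coeff_mul_X_pow', mul_comm]

theorem natDegree_X_pow_mul_one_sub_X_pow_lt {k : ℕ} (hk : k < m) :
    (X ^ k * (1 - X : R[X]) ^ (m - 1 - k)).natDegree < m := by
  have : (X ^ k * (1 - X : R[X]) ^ (m - 1 - k)).natDegree ≤ k + (m - 1 - k) := by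
    compute_degree
  omega

theorem det_coeffMatrix_X_pow_mul_one_sub_X_pow :
    (coeffMatrix fun k : Fin m => X ^ (k : ℕ) * (1 - X : R[X]) ^ (m - 1 - k)).det = 1 := by
  rw [det_coeffMatrix_of_comp_one_sub_X _ (fun k => (1 - X) ^ (k : ℕ))
    (fun k => natDegree_X_pow_mul_one_sub_X_pow_lt k.isLt) fun k => ?_]
  · simp [coeff_zero_eq_eval_zero]
  · simp only [mul_comp, pow_comp, X_comp, sub_comp, one_comp, sub_sub_cancel]
    ring

theorem one_add_X_pow_mul_X_pow_mul_one_sub_X_pow (n k : ℕ) :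
    (1 + X : R[X]) ^ (n + k + 2) * (X ^ k * (1 - X) ^ n) =
      X ^ k * (1 + X) ^ (k + 2) * expand R 2 ((1 - X) ^ n) := by
  rw [map_pow, map_sub, map_one, expand_X, show (1 - X ^ 2 : R[X]) = (1 - X) * (1 + X) by ring,
    mul_pow]
  ring

theorem eval_one_oddPart_X_pow_mul_one_add_X_pow (k : ℕ) :
    (oddPart (X ^ k * (1 + X) ^ (k + 2) : ℤ[X])).eval 1 = 2 ^ (k + 1) := by
  refine mul_left_cancel₀ two_ne_zero ?_
  rw [two_mul_eval_one_oddPart]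
  norm_num [pow_succ, mul_comm]

theorem natDegree_oddPart_mul_one_sub_X_pow_lt {k : ℕ} (hk : k < m) :
    (oddPart (X ^ k * (1 + X) ^ (k + 2) : ℤ[X]) * (1 - X) ^ (m - 1 - k)).natDegree < m := by
  have hq : (X ^ k * (1 + X) ^ (k + 2) : ℤ[X]).natDegree ≤ 2 * k + 2 := by compute_degree; omega
  have hodd := (natDegree_oddPart_le (X ^ k * (1 + X) ^ (k + 2) : ℤ[X])).trans
    (Nat.div_le_div_right (Nat.sub_le_sub_right hq 1))
  have := natDegree_mul_le_of_le hodd (natDegree_pow_le_of_le (m - 1 - k) natDegree_one_sub_X_le)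
  omega

theorem det_coeffMatrix_oddPart :
    (coeffMatrix fun k : Fin m =>
      oddPart (X ^ (k : ℕ) * (1 + X) ^ ((k : ℕ) + 2) : ℤ[X]) * (1 - X) ^ (m - 1 - k)).det =
      2 ^ (m * (m + 1) / 2) := by
  rw [det_coeffMatrix_of_comp_one_sub_X _
    (fun k => (oddPart (X ^ (k : ℕ) * (1 + X) ^ ((k : ℕ) + 2) : ℤ[X])).comp (1 - X))
    (fun k => natDegree_oddPart_mul_one_sub_X_pow_lt k.isLt) fun k => ?_,
    ← Fin.prod_pow_val_add_one]
  · simp only [coeff_zero_eq_eval_zero, eval_comp, eval_sub, eval_one, eval_X, sub_zero,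
      eval_one_oddPart_X_pow_mul_one_add_X_pow]
  · simp only [mul_comp, pow_comp, X_comp, sub_comp, one_comp, sub_sub_cancel]
    ring

end Polynomial

open Polynomial

theorem stmt_18_general (m : ℕ) (A : Matrix (Fin m) (Fin m) ℤ)
    (hA : ∀ a b : Fin m, A a b =
      if (0 : ℤ) ≤ 2 * ((a : ℕ) + 1 : ℤ) - ((b : ℕ) + 1 : ℤ) then
        ((m + 1).choose (2 * ((a : ℕ) + 1 : ℤ) - ((b : ℕ) + 1 : ℤ)).toNat : ℤ)
      else 0) :
    A.det = 2 ^ (m * (m + 1) / 2) := by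
  have hA' : A = of fun a b : Fin m => if (b : ℕ) ≤ 2 * a + 1 then
      ((1 + X : ℤ[X]) ^ (m + 1)).coeff (2 * a + 1 - b) else 0 := by
    ext a b
    rw [hA, of_apply, add_comm 1 X, coeff_X_add_one_pow]
    split_ifs <;> first | omega | congr 2; omega
  rw [← mul_one A.det, ← det_coeffMatrix_X_pow_mul_one_sub_X_pow, ← Matrix.det_mul, hA',
    mul_coeffMatrix_eq_coeffMatrix_oddPart _ _ fun k => natDegree_X_pow_mul_one_sub_X_pow_lt k.isLt,
    ← det_coeffMatrix_oddPart]
  congr 2 with k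
  rw [show m + 1 = m - 1 - k + k + 2 by omega, one_add_X_pow_mul_X_pow_mul_one_sub_X_pow,
    oddPart_mul_expand]

theorem stmt_18 (m : ℕ) (hm : 1 ≤ m) (A : Matrix (Fin m) (Fin m) ℤ)
    (hA : ∀ a b : Fin m, A a b =
      if (0 : ℤ) ≤ 2 * ((a : ℕ) + 1 : ℤ) - ((b : ℕ) + 1 : ℤ) then
        ((m + 1).choose (2 * ((a : ℕ) + 1 : ℤ) - ((b : ℕ) + 1 : ℤ)).toNat : ℤ)
      else 0) :
    A.det = 2 ^ (m * (m + 1) / 2) :=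
  stmt_18_general m A hA
end
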